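/- arXiv:hep-th/0009129 — 7 statements merged into one kernel-verified Lean document; each statement's English description precedes it below -/
import Mathlib

section
/- For every positive integer n, the number of subgroups of the free abelian group ℤ × ℤ having index n equals σ₁(n) = ∑_{d ∣ n} d, the sum of the divisors of n. -/
open AddSubgroup

namespace CardIndexAux

/-- The subgroup of `ℤ × ℤ` generated by `(a, b)` and `(0, d)`. -/
def Hgen (a b d : ℤ) : AddSubgroup (ℤ × ℤ) :=
  AddSubgroup.closure {(a, b), (0, d)}

lemma mem_Hgen {a b d x y : ℤ} :
    (x, y) ∈ Hgen a b d ↔ ∃ s t : ℤ, x = s * a ∧ y = s * b + t * d := by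
  rw [Hgen, AddSubgroup.mem_closure_pair]
  constructor
  · rintro ⟨m, k, h⟩
    refine ⟨m, k, ?_, ?_⟩
    · simpa [mul_comm] using (congrArg Prod.fst h).symm
    · simpa [mul_comm] using (congrArg Prod.snd h).symm
  · rintro ⟨s, t, hx, hy⟩
    exact ⟨s, t, by simp [Prod.ext_iff, hx, hy, mul_comm]⟩

lemma index_Hgen (a d : ℕ) (ha : 0 < a) (hd : 0 < d) (b : ℤ) :
    (Hgen (a : ℤ) b (d : ℤ)).index = a * d := by
  set H := Hgen (a : ℤ) b (d : ℤ)
  -- the auxiliary homomorphism `f (x, y) = (x * a, y)`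
  set f : ℤ × ℤ →+ ℤ × ℤ := AddMonoidHom.prodMap (zmultiplesHom ℤ (a : ℤ)) (AddMonoidHom.id ℤ)
    with hf
  have hfapp : ∀ x y : ℤ, f (x, y) = (x * a, y) := by
    intro x y; simp [hf, AddMonoidHom.prodMap, smul_eq_mul]
  -- the homomorphism `g (x, y) = y - b * x : ZMod d`
  set g : ℤ × ℤ →+ ZMod d :=
    (Int.castAddHom (ZMod d)).comp (AddMonoidHom.snd ℤ ℤ) -
      (Int.castAddHom (ZMod d)).comp ((zmultiplesHom ℤ b).comp (AddMonoidHom.fst ℤ ℤ)) with hg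
  have hgapp : ∀ x y : ℤ, g (x, y) = ((y - x * b : ℤ) : ZMod d) := by
    intro x y; simp [hg, smul_eq_mul, sub_eq_sub_iff_sub_eq_sub]
  -- `H.comap f = g.ker`
  have hcomap : H.comap f = g.ker := by
    ext ⟨x, y⟩
    rw [AddSubgroup.mem_comap, hfapp, AddMonoidHom.mem_ker, hgapp, mem_Hgen,
      ZMod.intCast_zmod_eq_zero_iff_dvd]
    constructor
    · rintro ⟨s, t, hx, hy⟩
      have hs : s = x := by
        have : (a : ℤ) ≠ 0 := Int.natCast_ne_zero.2 ha.ne'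
        exact mul_right_cancel₀ this (by linarith)
      exact ⟨t, by rw [hy, hs]; ring⟩
    · rintro ⟨t, ht⟩
      exact ⟨x, t, rfl, by linarith⟩
  -- `f.range = (zmultiples a).prod ⊤`
  have hrange : f.range = (AddSubgroup.zmultiples (a : ℤ)).prod ⊤ := by
    ext ⟨x, y⟩
    simp only [AddMonoidHom.mem_range, AddSubgroup.mem_prod, AddSubgroup.mem_top, and_true,
      Int.mem_zmultiples_iff]
    constructor
    · rintro ⟨⟨p, q⟩, hpq⟩
      rw [hfapp] at hpq
      exact ⟨p, by simpa [mul_comm] using (congrArg Prod.fst hpq).symm⟩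
    · rintro ⟨c, hc⟩
      exact ⟨(c, y), by rw [hfapp]; simp [Prod.ext_iff, hc, mul_comm]⟩
  -- `H ≤ f.range`
  have hle : H ≤ f.range := by
    rintro ⟨x, y⟩ hxy
    rw [mem_Hgen] at hxy
    obtain ⟨s, t, hx, hy⟩ := hxy
    exact ⟨(s, y), by rw [hfapp]; simp [Prod.ext_iff, hx]⟩
  -- compute the relindex
  have hrel : H.relIndex f.range = d := by
    have h1 := AddSubgroup.relIndex_comap (H := H) (f := f) (K := (⊤ : AddSubgroup (ℤ × ℤ)))
    rw [AddSubgroup.relIndex_top_right, ← AddMonoidHom.range_eq_map] at h1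
    rw [← h1, hcomap, AddSubgroup.index_ker]
    have hsurj : Function.Surjective g := by
      intro z
      obtain ⟨y, rfl⟩ := ZMod.intCast_surjective (n := d) z
      exact ⟨(0, y), by rw [hgapp]; simp⟩
    rw [(AddMonoidHom.range_eq_top).2 hsurj]
    rw [Nat.card_congr AddSubgroup.topEquiv.toEquiv, Nat.card_zmod]
  have hKi : (f.range).index = a := by
    rw [hrange]
    simp [Int.index_zmultiples]
  have := AddSubgroup.relIndex_mul_index hle
  rw [hrel, hKi] at this
  rw [← this, mul_comm]

lemma Hgen_inj {a d a' d' : ℕ} {b b' : ℤ} (ha : 0 < a) (hd : 0 < d) (ha' : 0 < a')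
    (hd' : 0 < d') (hb : 0 ≤ b) (hbd : b < d) (hb' : 0 ≤ b') (hbd' : b' < d')
    (h : Hgen (a : ℤ) b (d : ℤ) = Hgen (a' : ℤ) b' (d' : ℤ)) : a = a' ∧ b = b' ∧ d = d' := by
  have ha0 : ((a : ℤ)) ≠ 0 := Int.natCast_ne_zero.2 ha.ne'
  have ha0' : ((a' : ℤ)) ≠ 0 := Int.natCast_ne_zero.2 ha'.ne'
  -- d = d'
  have hdmem : ((0 : ℤ), (d : ℤ)) ∈ Hgen (a' : ℤ) b' (d' : ℤ) := by
    rw [← h]; exact mem_Hgen.2 ⟨0, 1, by ring, by ring⟩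
  have hdmem' : ((0 : ℤ), (d' : ℤ)) ∈ Hgen (a : ℤ) b (d : ℤ) := by
    rw [h]; exact mem_Hgen.2 ⟨0, 1, by ring, by ring⟩
  obtain ⟨s, t, hs, ht⟩ := mem_Hgen.1 hdmem
  obtain ⟨s', t', hs', ht'⟩ := mem_Hgen.1 hdmem'
  have hs0 : s = 0 := by
    rcases mul_eq_zero.1 hs.symm with h0 | h0
    · exact h0
    · exact absurd h0 ha0'
  have hs0' : s' = 0 := by
    rcases mul_eq_zero.1 hs'.symm with h0 | h0
    · exact h0
    · exact absurd h0 ha0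
  rw [hs0] at ht; rw [hs0'] at ht'
  have hdd : (d' : ℤ) ∣ (d : ℤ) := ⟨t, by linarith⟩
  have hdd' : (d : ℤ) ∣ (d' : ℤ) := ⟨t', by linarith⟩
  have hDD : (d : ℤ) = (d' : ℤ) :=
    Int.dvd_antisymm (by positivity) (by positivity) hdd' hdd
  have hDDn : d = d' := Int.natCast_inj.1 hDD
  -- a = a'
  have habmem : ((a : ℤ), b) ∈ Hgen (a' : ℤ) b' (d' : ℤ) := by
    rw [← h]; exact mem_Hgen.2 ⟨1, 0, by ring, by ring⟩
  have habmem' : ((a' : ℤ), b') ∈ Hgen (a : ℤ) b (d : ℤ) := by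
    rw [h]; exact mem_Hgen.2 ⟨1, 0, by ring, by ring⟩
  obtain ⟨u, v, hu, hv⟩ := mem_Hgen.1 habmem
  obtain ⟨u', v', hu', hv'⟩ := mem_Hgen.1 habmem'
  have huu : (a : ℤ) = u * u' * a := by
    calc (a : ℤ) = u * a' := hu
    _ = u * (u' * a) := by rw [hu']
    _ = u * u' * a := by ring
  have hu1 : u * u' = 1 := by
    have : (u * u' - 1) * (a : ℤ) = 0 := by linear_combination -huu
    rcases mul_eq_zero.1 this with h0 | h0
    · linarith
    · exact absurd h0 ha0
  have hupos : 0 < u := by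
    rcases Int.isUnit_iff.1 (IsUnit.of_mul_eq_one _ hu1) with h1 | h1
    · rw [h1]; norm_num
    · exfalso
      rw [h1] at hu
      have : (0 : ℤ) < a := by positivity
      have : (0 : ℤ) < a' := by positivity
      omega
  have hu1' : u = 1 := by
    rcases Int.isUnit_iff.1 (IsUnit.of_mul_eq_one _ hu1) with h1 | h1
    · exact h1
    · omega
  have hAA : a = a' := by
    have : (a : ℤ) = (a' : ℤ) := by rw [hu, hu1']; ring
    exact Int.natCast_inj.1 this
  -- b = b'
  have hbb : b = b' := by
    rw [hu1'] at hv
    have hdvd : (d' : ℤ) ∣ (b - b') := ⟨v, by linarith⟩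
    have : b - b' = 0 := by
      refine Int.eq_zero_of_abs_lt_dvd hdvd ?_
      rw [abs_lt]
      constructor <;> [linarith [hbd, hb'] ; skip]
      rw [← hDD]; linarith [hbd, hb']
    linarith
  exact ⟨hAA, hbb, hDDn⟩

lemma exists_Hgen (n : ℕ) (hn : 0 < n) (H : AddSubgroup (ℤ × ℤ)) (hH : H.index = n) :
    ∃ (a d : ℕ) (b : ℤ), 0 < a ∧ 0 < d ∧ 0 ≤ b ∧ b < d ∧ a * d = n ∧
      H = Hgen (a : ℤ) b (d : ℤ) := by
  -- the image of the first projection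
  obtain ⟨g₁, hg₁⟩ := Int.subgroup_cyclic (H.map (AddMonoidHom.fst ℤ ℤ))
  rw [← AddSubgroup.zmultiples_eq_closure] at hg₁
  set a : ℕ := g₁.natAbs with hadef
  have hmemA : ∀ x : ℤ, x ∈ H.map (AddMonoidHom.fst ℤ ℤ) ↔ (a : ℤ) ∣ x := by
    intro x
    rw [hg₁, Int.mem_zmultiples_iff, hadef, Int.natAbs_dvd]
  -- `a ≠ 0`
  have hHleK : H ≤ (H.map (AddMonoidHom.fst ℤ ℤ)).comap (AddMonoidHom.fst ℤ ℤ) := by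
    intro p hp
    exact AddSubgroup.mem_comap.2 (AddSubgroup.mem_map_of_mem _ hp)
  have hKdvd : ((H.map (AddMonoidHom.fst ℤ ℤ)).comap (AddMonoidHom.fst ℤ ℤ)).index ∣ n := by
    rw [← hH]; exact AddSubgroup.index_dvd_of_le hHleK
  have hfst_surj : Function.Surjective (AddMonoidHom.fst ℤ ℤ) := fun x => ⟨(x, 0), rfl⟩
  have hApos : 0 < a := by
    rcases Nat.eq_zero_or_pos a with h0 | h0
    · exfalso
      have hidx : ((H.map (AddMonoidHom.fst ℤ ℤ)).comap (AddMonoidHom.fst ℤ ℤ)).index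
          = (H.map (AddMonoidHom.fst ℤ ℤ)).index :=
        AddSubgroup.index_comap_of_surjective _ hfst_surj
      rw [hidx, hg₁, Int.index_zmultiples, ← hadef, h0] at hKdvd
      exact hn.ne' (Nat.eq_zero_of_zero_dvd hKdvd)
    · exact h0
  -- the subgroup `{y | (0, y) ∈ H}`
  obtain ⟨g₂, hg₂⟩ := Int.subgroup_cyclic (H.comap (AddMonoidHom.inr ℤ ℤ))
  rw [← AddSubgroup.zmultiples_eq_closure] at hg₂
  set d : ℕ := g₂.natAbs with hddef
  have hmemD : ∀ y : ℤ, (0, y) ∈ H ↔ (d : ℤ) ∣ y := by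
    intro y
    have : y ∈ H.comap (AddMonoidHom.inr ℤ ℤ) ↔ (0, y) ∈ H := by
      rw [AddSubgroup.mem_comap, AddMonoidHom.inr_apply]
    rw [← this, hg₂, Int.mem_zmultiples_iff, hddef, Int.natAbs_dvd]
  have hDpos : 0 < d := by
    rcases Nat.eq_zero_or_pos d with h0 | h0
    · exfalso
      have h1 : (H.comap (AddMonoidHom.inr ℤ ℤ)).index
          = H.relIndex (AddMonoidHom.inr ℤ ℤ).range := AddSubgroup.index_comap H _
      have h2 : H.relIndex (AddMonoidHom.inr ℤ ℤ).range ∣ H.index :=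
        AddSubgroup.relIndex_dvd_index_of_normal H _
      rw [← h1, hg₂, Int.index_zmultiples, ← hddef, h0, hH] at h2
      exact hn.ne' (Nat.eq_zero_of_zero_dvd h2)
    · exact h0
  have hd0 : (d : ℤ) ≠ 0 := Int.natCast_ne_zero.2 hDpos.ne'
  -- pick an element of `H` with first coordinate `a`
  have haA : (a : ℤ) ∈ H.map (AddMonoidHom.fst ℤ ℤ) := (hmemA _).2 dvd_rfl
  obtain ⟨⟨x₀, b₀⟩, hp, hpx⟩ := haA
  have hx₀ : x₀ = (a : ℤ) := hpx
  set b : ℤ := b₀ % d with hbdef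
  have hb0 : 0 ≤ b := Int.emod_nonneg _ hd0
  have hbd : b < d := Int.emod_lt_of_pos _ (by positivity)
  have h0d : ((0 : ℤ), (d : ℤ)) ∈ H := (hmemD _).2 dvd_rfl
  have hab : ((a : ℤ), b) ∈ H := by
    have : ((a : ℤ), b) = (x₀, b₀) - (b₀ / d) • ((0 : ℤ), (d : ℤ)) := by
      rw [hx₀]
      simp only [Prod.ext_iff, Prod.smul_fst, Prod.smul_snd, Prod.fst_sub, Prod.snd_sub,
        smul_eq_mul]
      constructor
      · ring
      · rw [hbdef, Int.emod_def]; ring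
    rw [this]
    exact AddSubgroup.sub_mem _ hp (AddSubgroup.zsmul_mem _ h0d _)
  -- H = Hgen a b d
  have hHeq : H = Hgen (a : ℤ) b (d : ℤ) := by
    apply le_antisymm
    · rintro ⟨x, y⟩ hxy
      have hx : (a : ℤ) ∣ x := (hmemA x).1 ⟨(x, y), hxy, rfl⟩
      obtain ⟨s, hs⟩ := hx
      have h2 : ((0 : ℤ), y - s * b) ∈ H := by
        have : ((0 : ℤ), y - s * b) = (x, y) - s • ((a : ℤ), b) := by
          simp [Prod.ext_iff, hs, smul_eq_mul]; ring
        rw [this]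
        exact AddSubgroup.sub_mem _ hxy (AddSubgroup.zsmul_mem _ hab _)
      obtain ⟨t, ht⟩ := (hmemD _).1 h2
      exact mem_Hgen.2 ⟨s, t, by rw [hs]; ring, by rw [mul_comm] at ht; linarith⟩
    · rw [Hgen]
      rw [AddSubgroup.closure_le]
      rintro p (rfl | rfl)
      · exact hab
      · exact h0d
  refine ⟨a, d, b, hApos, hDpos, hb0, hbd, ?_, hHeq⟩
  have := index_Hgen a d hApos hDpos b
  rw [← hHeq, hH] at this
  exact this.symm

end CardIndexAux

open CardIndexAux in
/-- The number of subgroups of ℤ × ℤ of index n equals σ₁(n), the sum of the divisors of n. -/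
theorem card_index_n_subgroups_int_prod_int (n : ℕ) (hn : 0 < n) :
    Nat.card {H : AddSubgroup (ℤ × ℤ) // H.index = n} = ∑ d ∈ n.divisors, d := by
  have key : ∀ p : (d : n.divisors) × Fin d, True := fun _ => trivial
  -- the classifying bijection
  have hdpos : ∀ d : n.divisors, 0 < (d : ℕ) := fun d => Nat.pos_of_mem_divisors d.2
  have hddvd : ∀ d : n.divisors, (d : ℕ) ∣ n := fun d => (Nat.mem_divisors.1 d.2).1
  have hapos : ∀ d : n.divisors, 0 < n / (d : ℕ) :=
    fun d => Nat.div_pos (Nat.le_of_dvd hn (hddvd d)) (hdpos d)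
  have hmul : ∀ d : n.divisors, n / (d : ℕ) * (d : ℕ) = n :=
    fun d => Nat.div_mul_cancel (hddvd d)
  let F : ((d : n.divisors) × Fin d) → {H : AddSubgroup (ℤ × ℤ) // H.index = n} :=
    fun p => ⟨Hgen ((n / (p.1 : ℕ) : ℕ) : ℤ) ((p.2 : ℕ) : ℤ) ((p.1 : ℕ) : ℤ), by
      rw [index_Hgen _ _ (hapos p.1) (hdpos p.1)]
      exact hmul p.1⟩
  have hFbij : Function.Bijective F := by
    constructor
    · rintro ⟨⟨d₁, hd₁⟩, b₁⟩ ⟨⟨d₂, hd₂⟩, b₂⟩ hF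
      have heq : Hgen ((n / d₁ : ℕ) : ℤ) ((b₁ : ℕ) : ℤ) ((d₁ : ℕ) : ℤ)
          = Hgen ((n / d₂ : ℕ) : ℤ) ((b₂ : ℕ) : ℤ) ((d₂ : ℕ) : ℤ) :=
        congrArg Subtype.val hF
      obtain ⟨h1, h2, h3⟩ := Hgen_inj (hapos ⟨d₁, hd₁⟩) (hdpos ⟨d₁, hd₁⟩)
        (hapos ⟨d₂, hd₂⟩) (hdpos ⟨d₂, hd₂⟩) (Int.natCast_nonneg _)
        (by exact_mod_cast b₁.2) (Int.natCast_nonneg _) (by exact_mod_cast b₂.2) heq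
      have hd : d₁ = d₂ := h3
      subst hd
      have hb : (b₁ : ℕ) = (b₂ : ℕ) := Int.natCast_inj.1 h2
      simp [Fin.ext_iff, hb]
    · rintro ⟨H, hH⟩
      obtain ⟨a, d, b, ha, hd, hb0, hbd, hadn, hHeq⟩ := exists_Hgen n hn H hH
      have hdmem : d ∈ n.divisors := Nat.mem_divisors.2 ⟨⟨a, by rw [← hadn]; ring⟩, hn.ne'⟩
      have hnd : n / d = a := by rw [← hadn, Nat.mul_div_cancel _ hd]
      have hbnat : ((b.toNat : ℕ) : ℤ) = b := Int.toNat_of_nonneg hb0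
      have hblt : b.toNat < d := by omega
      refine ⟨⟨⟨d, hdmem⟩, ⟨b.toNat, hblt⟩⟩, ?_⟩
      apply Subtype.ext
      show Hgen ((n / d : ℕ) : ℤ) ((b.toNat : ℕ) : ℤ) ((d : ℕ) : ℤ) = H
      rw [hnd, hbnat, hHeq]
  rw [← Nat.card_eq_of_bijective F hFbij]
  rw [Nat.card_eq_fintype_card, Fintype.card_sigma]
  simp only [Fintype.card_fin]
  exact Finset.sum_coe_sort n.divisors id
end

section
/- For every positive integer n, the following identity of rational numbers holds: σ₁(n) = n · ∑_{k=1}^{n} ((−1)^{k+1}/k) · ∑_{m₁+⋯+m_k = n, each mᵢ ≥ 1} ∏_{i=1}^{k} p(mᵢ), where the inner sum ranges over all ordered k-tuples (m₁,…,m_k) of positive integers summing to n. -/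
open Finset PowerSeries

def pcount (m : ℕ) : ℕ := Fintype.card (Nat.Partition m)

lemma pcount_zero : pcount 0 = 1 := by simp [pcount]

/-- adding `j` copies of `d` to a partition of `n - d*j` -/
def addReplicate (d j n : ℕ) (hd : 0 < d) (h : d * j ≤ n) :
    (n - d * j).Partition ≃ {lam : n.Partition // j ≤ Multiset.count d lam.parts} where
  toFun mu := ⟨⟨mu.parts + Multiset.replicate j d,
      by
        intro i hi
        rcases Multiset.mem_add.mp hi with h1 | h2
        · exact mu.parts_pos h1
        · rwa [Multiset.eq_of_mem_replicate h2],
      by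
        rw [Multiset.sum_add, mu.parts_sum, Multiset.sum_replicate, smul_eq_mul, mul_comm j d]
        omega⟩,
      by simp [Multiset.count_replicate]⟩
  invFun lam := ⟨lam.1.parts - Multiset.replicate j d,
      by
        intro i hi
        exact lam.1.parts_pos (Multiset.mem_of_le (Multiset.sub_le_self _ _) hi),
      by
        have hle : Multiset.replicate j d ≤ lam.1.parts :=
          Multiset.le_count_iff_replicate_le.mp lam.2
        have := congrArg Multiset.sum (tsub_add_cancel_of_le hle)
        rw [Multiset.sum_add, Multiset.sum_replicate, smul_eq_mul, lam.1.parts_sum, mul_comm j d] at this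
        omega⟩
  left_inv mu := by
    ext1
    simp
  right_inv lam := by
    have hle : Multiset.replicate j d ≤ lam.1.parts :=
      Multiset.le_count_iff_replicate_le.mp lam.2
    apply Subtype.ext
    ext1
    exact tsub_add_cancel_of_le hle

lemma card_count_ge (d j n : ℕ) (hd : 0 < d) (hj : 0 < j) :
    (Finset.univ.filter fun lam : n.Partition => j ≤ Multiset.count d lam.parts).card
      = if d * j ≤ n then pcount (n - d * j) else 0 := by
  rw [← Fintype.card_subtype]
  split_ifs with hcase
  · exact (Fintype.card_congr (addReplicate d j n hd hcase)).symm
  · rw [Fintype.card_eq_zero_iff]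
    constructor
    rintro ⟨lam, hlam⟩
    have hle : Multiset.replicate j d ≤ lam.parts :=
      Multiset.le_count_iff_replicate_le.mp hlam
    obtain ⟨u, hu⟩ := Multiset.le_iff_exists_add.mp hle
    have := congrArg Multiset.sum hu
    rw [Multiset.sum_add, Multiset.sum_replicate, smul_eq_mul, lam.parts_sum,
      mul_comm j d] at this
    omega

lemma sigma_pcount_rec (n : ℕ) (hn : 0 < n) :
    ∑ m ∈ Icc 1 n, (∑ d ∈ m.divisors, d) * pcount (n - m) = n * pcount n := by
  -- Step 1: RHS = sum over partitions of n of the sum of parts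
  have step1 : n * pcount n = ∑ lam : n.Partition, lam.parts.sum := by
    simp only [Nat.Partition.parts_sum]
    rw [Finset.sum_const, pcount, smul_eq_mul, mul_comm, Finset.card_univ]
  -- Step 2: for each partition, sum of parts = ∑_{d ∈ Icc 1 n} d * count d
  have step2 : ∀ lam : n.Partition, lam.parts.sum
      = ∑ d ∈ Icc 1 n, lam.parts.count d * d := by
    intro lam
    have hsub : lam.parts.toFinset ⊆ Icc 1 n := by
      intro a ha
      rw [Multiset.mem_toFinset] at ha
      rw [Finset.mem_Icc]
      refine ⟨lam.parts_pos ha, ?_⟩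
      have := Multiset.single_le_sum (fun x _ => Nat.zero_le x) a ha
      rw [lam.parts_sum] at this
      exact this
    conv_lhs => rw [← Multiset.map_id lam.parts]
    rw [Finset.sum_multiset_map_count]
    simp only [smul_eq_mul, id]
    refine Finset.sum_subset hsub fun x _ hx => ?_
    rw [Multiset.count_eq_zero_of_notMem (by simpa using hx)]
    ring
  -- Step 3: count as a sum of indicators over j ∈ Icc 1 n
  have step3 : ∀ lam : n.Partition, ∀ d ∈ Icc 1 n, lam.parts.count d
      = ∑ j ∈ Icc 1 n, if j ≤ lam.parts.count d then 1 else 0 := by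
    intro lam d hd
    rw [← Finset.card_filter]
    have hcle : lam.parts.count d ≤ n := by
      have h1 : Multiset.card lam.parts ≤ lam.parts.sum := by
        have := Multiset.card_nsmul_le_sum (s := lam.parts) (a := 1)
          (fun x hx => lam.parts_pos hx)
        simpa using this
      calc lam.parts.count d ≤ Multiset.card lam.parts := Multiset.count_le_card _ _
        _ ≤ n := by rw [lam.parts_sum] at h1; exact h1
    have : (Icc 1 n).filter (fun j => j ≤ lam.parts.count d) = Icc 1 (lam.parts.count d) := by
      ext j; simp only [mem_filter, mem_Icc]; omega
    rw [this]
    simp [Nat.card_Icc]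
  -- combine: n * p n = ∑_{d,j ∈ Icc 1 n} d * #{lam | j ≤ count d}
  have step4 : n * pcount n = ∑ d ∈ Icc 1 n, ∑ j ∈ Icc 1 n,
      (if d * j ≤ n then pcount (n - d * j) * d else 0) := by
    rw [step1]
    calc ∑ lam : n.Partition, lam.parts.sum
        = ∑ lam : n.Partition, ∑ d ∈ Icc 1 n, lam.parts.count d * d := by
          exact Finset.sum_congr rfl fun lam _ => step2 lam
      _ = ∑ d ∈ Icc 1 n, ∑ lam : n.Partition, lam.parts.count d * d := Finset.sum_comm
      _ = ∑ d ∈ Icc 1 n, ∑ j ∈ Icc 1 n,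
            (if d * j ≤ n then pcount (n - d * j) * d else 0) := by
          refine Finset.sum_congr rfl fun d hd => ?_
          calc ∑ lam : n.Partition, lam.parts.count d * d
              = ∑ lam : n.Partition, (∑ j ∈ Icc 1 n,
                  if j ≤ lam.parts.count d then 1 else 0) * d := by
                exact Finset.sum_congr rfl fun lam _ => by rw [← step3 lam d hd]
            _ = ∑ j ∈ Icc 1 n, (∑ lam : n.Partition,
                  if j ≤ lam.parts.count d then 1 else 0) * d := by
                rw [← Finset.sum_mul, ← Finset.sum_mul, Finset.sum_comm]
            _ = _ := by
                refine Finset.sum_congr rfl fun j hj => ?_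
                rw [← Finset.card_filter,
                  card_count_ge d j n (mem_Icc.mp hd).1 (mem_Icc.mp hj).1,
                  ite_mul, zero_mul]
  rw [step4]
  -- Step 5: reindex divisor sum to the grid
  rw [← Finset.sum_product']
  rw [← Finset.sum_filter]
  simp only [Finset.sum_mul]
  rw [Finset.sum_sigma']
  refine Finset.sum_nbij' (i := fun x => (x.2, x.1 / x.2))
    (j := fun q => ⟨q.1 * q.2, q.1⟩) ?_ ?_ ?_ ?_ ?_
  · rintro ⟨m, d⟩ hmd
    simp only [Finset.mem_sigma, mem_Icc, Nat.mem_divisors] at hmd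
    obtain ⟨⟨h1m, hmn⟩, hdm, hm0⟩ := hmd
    simp only [Finset.mem_filter, Finset.mem_product, mem_Icc]
    have hd0 : 0 < d := Nat.pos_of_dvd_of_pos hdm h1m
    have hdiv : d * (m / d) = m := Nat.mul_div_cancel' hdm
    refine ⟨⟨⟨hd0, le_trans (Nat.le_of_dvd h1m hdm) hmn⟩, ⟨?_, ?_⟩⟩, ?_⟩
    · exact Nat.one_le_div_iff hd0 |>.mpr (Nat.le_of_dvd h1m hdm)
    · exact le_trans (Nat.div_le_self m d) hmn
    · rw [hdiv]; exact hmn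
  · rintro ⟨d, j⟩ hq
    simp only [Finset.mem_filter, Finset.mem_product, mem_Icc] at hq
    obtain ⟨⟨⟨h1d, hdn⟩, h1j, hjn⟩, hdjn⟩ := hq
    simp only [Finset.mem_sigma, mem_Icc, Nat.mem_divisors]
    exact ⟨⟨Nat.one_le_iff_ne_zero.mpr (by positivity), hdjn⟩, ⟨Dvd.intro j rfl,
      by positivity⟩⟩
  · rintro ⟨m, d⟩ hmd
    simp only [Finset.mem_sigma, mem_Icc, Nat.mem_divisors] at hmd
    obtain ⟨⟨h1m, hmn⟩, hdm, hm0⟩ := hmd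
    simp only [Sigma.mk.inj_iff]
    constructor
    · exact Nat.mul_div_cancel' hdm
    · exact heq_of_eq rfl
  · rintro ⟨d, j⟩ hq
    simp only [Finset.mem_filter, Finset.mem_product, mem_Icc] at hq
    obtain ⟨⟨⟨h1d, hdn⟩, h1j, hjn⟩, hdjn⟩ := hq
    simp only [Prod.mk.injEq]
    exact ⟨trivial, Nat.mul_div_cancel_left j (by omega)⟩
  · rintro ⟨m, d⟩ hmd
    simp only [Finset.mem_sigma, mem_Icc, Nat.mem_divisors] at hmd
    obtain ⟨⟨h1m, hmn⟩, hdm, hm0⟩ := hmd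
    have hdiv : d * (m / d) = m := Nat.mul_div_cancel' hdm
    rw [hdiv, mul_comm]

noncomputable def Qps : PowerSeries ℚ :=
  PowerSeries.mk fun m => if m = 0 then 0 else (pcount m : ℚ)

def Csum (k n : ℕ) : ℚ :=
  ∑ c ∈ (Finset.Nat.antidiagonalTuple k n).filter fun c => ∀ i, 0 < c i,
    ∏ i, (pcount (c i) : ℚ)

lemma coeff_Qps (m : ℕ) : (coeff m) Qps = if m = 0 then 0 else (pcount m : ℚ) := by
  simp [Qps]

lemma coeff_Qps_pow (k n : ℕ) : coeff n (Qps ^ k) = Csum k n := by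
  have : Qps ^ k = ∏ _i : Fin k, Qps := by
    rw [Finset.prod_const, Finset.card_univ, Fintype.card_fin]
  rw [this, coeff_prod]
  rw [← Finset.sum_filter_of_ne (p := fun l => ∀ i : Fin k, 0 < l i)
    (fun l hl hne => by
      by_contra hc
      simp only [not_forall, not_lt, Nat.le_zero] at hc
      obtain ⟨i, hi⟩ := hc
      apply hne
      refine Finset.prod_eq_zero (Finset.mem_univ i) ?_
      rw [coeff_Qps, if_pos hi])]
  unfold Csum
  refine Finset.sum_nbij' (i := fun l => (l : Fin k → ℕ))
    (j := fun c => Finsupp.equivFunOnFinite.symm c) ?_ ?_ ?_ ?_ ?_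
  · intro l hl
    simp only [Finset.mem_filter, mem_finsuppAntidiag] at hl ⊢
    rw [Finset.Nat.mem_antidiagonalTuple]
    exact ⟨hl.1.1, hl.2⟩
  · intro c hc
    simp only [Finset.mem_filter, Finset.Nat.mem_antidiagonalTuple] at hc
    simp only [Finset.mem_filter, mem_finsuppAntidiag]
    refine ⟨⟨?_, Finset.subset_univ _⟩, ?_⟩
    · exact hc.1
    · intro i; exact hc.2 i
  · intro l _; exact Finsupp.equivFunOnFinite.symm_apply_apply l
  · intro c _; rfl
  · intro l hl
    simp only [Finset.mem_filter, mem_finsuppAntidiag] at hl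
    refine Finset.prod_congr rfl fun i _ => ?_
    rw [coeff_Qps, if_neg]
    have := hl.2 i
    omega

lemma Csum_eq_zero {k n : ℕ} (h : n < k) : Csum k n = 0 := by
  unfold Csum
  refine Finset.sum_eq_zero fun c hc => ?_
  exfalso
  simp only [Finset.mem_filter, Finset.Nat.mem_antidiagonalTuple] at hc
  have : k ≤ n := by
    calc k = ∑ _i : Fin k, 1 := by simp
      _ ≤ ∑ i, c i := Finset.sum_le_sum fun i _ => hc.2 i
      _ = n := hc.1
  omega

lemma coeff_pow_mul_lt {m k : ℕ} (h : m < k) (g : PowerSeries ℚ) :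
    coeff m (Qps ^ k * g) = 0 := by
  rw [coeff_mul]
  refine Finset.sum_eq_zero fun q hq => ?_
  rw [Finset.HasAntidiagonal.mem_antidiagonal] at hq
  rw [coeff_Qps_pow, Csum_eq_zero (by omega), zero_mul]

noncomputable def fq (m : ℕ) : ℚ := ∑ k ∈ Icc 1 m, (-1 : ℚ) ^ (k + 1) / k * Csum k m

noncomputable def Lps (n : ℕ) : PowerSeries ℚ :=
  ∑ k ∈ Icc 1 n, ((-1 : ℚ) ^ (k + 1) / k) • Qps ^ k

noncomputable def Pps : PowerSeries ℚ := 1 + Qps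

lemma coeff_Pps (m : ℕ) : coeff m Pps = (pcount m : ℚ) := by
  unfold Pps
  rw [map_add, coeff_Qps, coeff_one]
  split_ifs with h
  · subst h; simp [pcount]
  · simp

lemma coeff_Lps {m n : ℕ} (h : m ≤ n) : coeff m (Lps n) = fq m := by
  unfold Lps fq
  rw [map_sum]
  simp only [map_smul, coeff_Qps_pow, smul_eq_mul]
  symm
  refine Finset.sum_subset (Finset.Icc_subset_Icc_right h) fun k hk hk' => ?_
  simp only [mem_Icc] at hk hk'
  rw [Csum_eq_zero (by omega), mul_zero]

lemma derivative_Lps (n : ℕ) :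
    d⁄dX ℚ (Lps n) = (∑ j ∈ range n, (- Qps) ^ j) * d⁄dX ℚ Qps := by
  unfold Lps
  rw [map_sum]
  have h1 : ∀ k ∈ Icc 1 n, d⁄dX ℚ (((-1 : ℚ) ^ (k + 1) / k) • Qps ^ k)
      = ((-1 : ℚ) ^ (k + 1)) • (Qps ^ (k - 1) * d⁄dX ℚ Qps) := by
    intro k hk
    have hk1 : 1 ≤ k := (mem_Icc.mp hk).1
    have hkq : (k : ℚ) ≠ 0 := Nat.cast_ne_zero.mpr (by omega)
    rw [Derivation.map_smul, Derivation.leibniz_pow,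
      smul_eq_mul (α := ℚ⟦X⟧), ← Nat.cast_smul_eq_nsmul ℚ, smul_smul]
    congr 1
    exact div_mul_cancel₀ _ hkq
  rw [Finset.sum_congr rfl h1]
  rw [← Finset.Ico_add_one_right_eq_Icc, Finset.sum_Ico_eq_sum_range]
  simp only [Nat.add_sub_cancel]
  rw [Finset.sum_mul]
  refine Finset.sum_congr rfl fun j hj => ?_
  have h2 : (1 + j - 1) = j := by omega
  have h3 : (-1 : ℚ) ^ (1 + j + 1) = (-1 : ℚ) ^ j := by
    rw [show 1 + j + 1 = j + 2 by omega, pow_add]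
    simp
  rw [h2, h3, neg_pow Qps j, mul_assoc, PowerSeries.smul_eq_C_mul, map_pow, map_neg,
    map_one]

lemma key_recurrence (n : ℕ) (hn : 0 < n) :
    ∑ m ∈ Icc 1 n, (m : ℚ) * fq m * (pcount (n - m) : ℚ) = n * pcount n := by
  have E1 : coeff (n - 1) (Pps * d⁄dX ℚ (Lps n)) = n * pcount n := by
    rw [derivative_Lps, ← mul_assoc]
    have hgeom : Pps * (∑ j ∈ range n, (- Qps) ^ j) = 1 - (- Qps) ^ n := by
      have := mul_neg_geom_sum (- Qps) n
      rw [sub_neg_eq_add] at this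
      exact this
    rw [hgeom, sub_mul, one_mul, map_sub]
    have hz : coeff (n - 1) ((- Qps) ^ n * d⁄dX ℚ Qps) = 0 := by
      rw [neg_pow, mul_assoc]
      rw [show ((-1 : ℚ⟦X⟧) ^ n * (Qps ^ n * d⁄dX ℚ Qps)) =
        ((-1 : ℚ)^n) • (Qps ^ n * d⁄dX ℚ Qps) by
          rw [PowerSeries.smul_eq_C_mul, map_pow, map_neg, map_one]]
      rw [map_smul, coeff_pow_mul_lt (by omega), smul_zero]
    rw [hz, sub_zero, coeff_derivative, coeff_Qps]
    have h6 : n - 1 + 1 = n := by omega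
    rw [h6, if_neg (by omega)]
    have h7 : ((n - 1 : ℕ) : ℚ) = (n : ℚ) - 1 := by
      have : (1:ℕ) ≤ n := hn
      push_cast [this]
      ring
    rw [h7]
    ring
  have E2 : coeff (n - 1) (Pps * d⁄dX ℚ (Lps n))
      = ∑ m ∈ Icc 1 n, (m : ℚ) * fq m * (pcount (n - m) : ℚ) := by
    rw [coeff_mul, Finset.Nat.sum_antidiagonal_eq_sum_range_succ_mk]
    have hn1 : (n - 1).succ = n := by omega
    rw [hn1]
    refine Finset.sum_nbij' (i := fun i => n - i) (j := fun m => n - m) ?_ ?_ ?_ ?_ ?_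
    · intro i hi; simp only [mem_range] at hi; simp only [mem_Icc]; omega
    · intro m hm; simp only [mem_Icc] at hm; simp only [mem_range]; omega
    · intro i hi; simp only [mem_range] at hi; omega
    · intro m hm; simp only [mem_Icc] at hm; omega
    · intro i hi
      simp only [mem_range] at hi
      rw [coeff_Pps, coeff_derivative]
      have h4 : n - 1 - i + 1 = n - i := by omega
      rw [h4, coeff_Lps (by omega)]
      have h5 : n - (n - i) = i := by omega
      rw [h5]
      have h8 : ((n - 1 - i : ℕ) : ℚ) + 1 = ((n - i : ℕ) : ℚ) := by
        exact_mod_cast congrArg (Nat.cast (R := ℚ)) h4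
      rw [← h8]
      ring
  rw [← E2, E1]

lemma nf_eq_sigma : ∀ n : ℕ, 0 < n → (n : ℚ) * fq n = ((∑ d ∈ n.divisors, d : ℕ) : ℚ) := by
  intro n
  induction n using Nat.strong_induction_on with
  | _ n ih =>
    intro hn
    have hA := sigma_pcount_rec n hn
    have hAq : ∑ m ∈ Icc 1 n, ((∑ d ∈ m.divisors, d : ℕ) : ℚ) * (pcount (n - m) : ℚ)
        = (n : ℚ) * (pcount n : ℚ) := by exact_mod_cast congrArg (Nat.cast (R := ℚ)) hA
    have hB := key_recurrence n hn
    have hsplit : ∀ g : ℕ → ℚ, ∑ m ∈ Icc 1 n, g m = ∑ m ∈ Icc 1 (n - 1), g m + g n := by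
      intro g
      have h1 : n = (n - 1) + 1 := by omega
      rw [h1, Finset.sum_Icc_succ_top (by omega)]
      rw [← h1]
    rw [hsplit] at hAq hB
    have hn0 : n - n = 0 := by omega
    rw [hn0, pcount_zero] at hAq hB
    have hsame : ∑ m ∈ Icc 1 (n - 1), (m : ℚ) * fq m * (pcount (n - m) : ℚ)
        = ∑ m ∈ Icc 1 (n - 1), ((∑ d ∈ m.divisors, d : ℕ) : ℚ) * (pcount (n - m) : ℚ) := by
      refine Finset.sum_congr rfl fun m hm => ?_
      simp only [mem_Icc] at hm
      rw [ih m (by omega) (by omega)]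
    rw [hsame] at hB
    have := hB.trans hAq.symm
    simpa using this

/-- σ₁(n) = n · ∑_{k=1}^{n} ((−1)^{k+1}/k) · ∑_{m₁+⋯+m_k=n, mᵢ ≥ 1} ∏ p(mᵢ), where p is the
partition counting function. -/
theorem sigma_one_eq_partition_sum (n : ℕ) (hn : 0 < n) :
    ((∑ d ∈ n.divisors, d : ℕ) : ℚ) =
      n * ∑ k ∈ Finset.Icc 1 n, (-1 : ℚ) ^ (k + 1) / k *
        ∑ c ∈ (Finset.Nat.antidiagonalTuple k n).filter fun c => ∀ i, 0 < c i,
          ∏ i, (Fintype.card (Nat.Partition (c i)) : ℚ) := by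
  rw [← nf_eq_sigma n hn]
  simp only [fq, Csum, pcount]
end

section
/- For every positive integer n, the number of ordered pairs (a,b) of elements of the symmetric group S_n such that a and b commute and the subgroup of S_n generated by a and b acts transitively on the n points equals (n−1)! · σ₁(n), where σ₁(n) = ∑_{d ∣ n} d. -/
open Equiv

section Canonical

variable (e d k : ℕ)

/-- canonical shift in first coordinate -/
def canA : Perm (ZMod e × ZMod d) where
  toFun p := (p.1 + 1, p.2)
  invFun p := (p.1 - 1, p.2)
  left_inv p := by simp
  right_inv p := by simp

/-- canonical shift in second coordinate with twist k -/
def canB : Perm (ZMod e × ZMod d) where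
  toFun p := (p.1 + if p.2 + 1 = 0 then (k : ZMod e) else 0, p.2 + 1)
  invFun p := (p.1 - if p.2 = 0 then (k : ZMod e) else 0, p.2 - 1)
  left_inv p := by simp
  right_inv p := by simp

lemma canA_apply (p : ZMod e × ZMod d) : canA e d p = (p.1 + 1, p.2) := rfl

lemma canB_apply (p : ZMod e × ZMod d) :
    canB e d k p = (p.1 + if p.2 + 1 = 0 then (k : ZMod e) else 0, p.2 + 1) := rfl

lemma canA_pow (m : ℕ) (p : ZMod e × ZMod d) : (canA e d ^ m) p = (p.1 + m, p.2) := by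
  induction m with
  | zero => simp
  | succ m ih => rw [pow_succ', Perm.mul_apply, ih, canA_apply]; push_cast; exact Prod.ext (by ring) rfl

lemma canAB_comm : canA e d * canB e d k = canB e d k * canA e d := by
  ext p <;> simp [canA_apply, canB_apply, Perm.mul_apply] <;> ring

lemma canB_pow [NeZero d] (m : ℕ) (p : ZMod e × ZMod d) :
    (canB e d k ^ m) p = (p.1 + (k : ZMod e) * ((p.2.val + m) / d : ℕ), p.2 + m) := by
  induction m with
  | zero => simp [Nat.div_eq_of_lt (ZMod.val_lt p.2)]
  | succ m ih =>
      rw [pow_succ', Perm.mul_apply, ih, canB_apply]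
      have h2 : (p.2 + (m : ZMod d)) + 1 = 0 ↔ d ∣ (p.2.val + m + 1) := by
        rw [← ZMod.natCast_eq_zero_iff]
        push_cast
        rw [ZMod.natCast_val, ZMod.cast_id]
      have hdiv : (p.2.val + (m+1)) / d = (p.2.val + m) / d + if d ∣ (p.2.val + m + 1) then 1 else 0 := by
        rw [← Nat.add_assoc, Nat.succ_div]
      rw [hdiv]
      by_cases hc : d ∣ (p.2.val + m + 1)
      · rw [if_pos hc, if_pos (h2.mpr hc)]
        push_cast
        exact Prod.ext (by ring) (by ring)
      · rw [if_neg hc, if_neg (fun hh => hc (h2.mp hh))]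
        push_cast
        exact Prod.ext (by ring) (by ring)

lemma canB_pow_d [NeZero d] (p : ZMod e × ZMod d) :
    (canB e d k ^ d) p = (p.1 + (k : ZMod e), p.2) := by
  rw [canB_pow]
  have h1 : (p.2.val + d) / d = 1 := by
    rw [Nat.add_div_right _ (Nat.pos_of_ne_zero (NeZero.ne d)), Nat.div_eq_of_lt (ZMod.val_lt p.2)]
  rw [h1]
  simp

lemma canA_pow_eq_one_iff [NeZero e] [NeZero d] (m : ℕ) : canA e d ^ m = 1 ↔ e ∣ m := by
  constructor
  · intro h
    have := congrArg (fun (g : Perm (ZMod e × ZMod d)) => (g (0, 0)).1) h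
    simp only [canA_pow, Perm.one_apply] at this
    rw [zero_add] at this
    exact (ZMod.natCast_eq_zero_iff m e).mp this
  · intro h
    ext p
    · rw [canA_pow, Perm.one_apply, (ZMod.natCast_eq_zero_iff m e).mpr h, add_zero]
    · rw [canA_pow]
      rfl

lemma orderOf_canA [NeZero e] [NeZero d] : orderOf (canA e d) = e := by
  have h1 : orderOf (canA e d) ∣ e := orderOf_dvd_iff_pow_eq_one.mpr
    ((canA_pow_eq_one_iff e d e).mpr dvd_rfl)
  have h2 : e ∣ orderOf (canA e d) :=
    (canA_pow_eq_one_iff e d _).mp (pow_orderOf_eq_one _)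
  exact Nat.dvd_antisymm h1 h2

lemma can_reach [NeZero e] [NeZero d] (z : ZMod e × ZMod d) :
    (canA e d ^ z.1.val * canB e d k ^ z.2.val) (0, 0) = z := by
  rw [Perm.mul_apply, canB_pow, canA_pow]
  simp only [ZMod.val_zero, zero_add, Nat.div_eq_of_lt (ZMod.val_lt z.2)]
  simp [ZMod.natCast_val, ZMod.cast_id]

lemma can_trans [NeZero e] [NeZero d] (y z : ZMod e × ZMod d) :
    ∃ g ∈ Subgroup.closure {canA e d, canB e d k}, g y = z := by
  have hA : canA e d ∈ Subgroup.closure {canA e d, canB e d k} :=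
    Subgroup.subset_closure (Set.mem_insert _ _)
  have hB : canB e d k ∈ Subgroup.closure {canA e d, canB e d k} :=
    Subgroup.subset_closure (Set.mem_insert_of_mem _ rfl)
  refine ⟨(canA e d ^ z.1.val * canB e d k ^ z.2.val) *
      (canA e d ^ y.1.val * canB e d k ^ y.2.val)⁻¹, ?_, ?_⟩
  · exact Subgroup.mul_mem _ (Subgroup.mul_mem _ (Subgroup.pow_mem _ hA _) (Subgroup.pow_mem _ hB _))
      (Subgroup.inv_mem _ (Subgroup.mul_mem _ (Subgroup.pow_mem _ hA _) (Subgroup.pow_mem _ hB _)))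
  · rw [Perm.mul_apply]
    have h1 : ((canA e d ^ y.1.val * canB e d k ^ y.2.val)⁻¹ : Perm (ZMod e × ZMod d)) y = (0, 0) := by
      rw [Perm.inv_def, Equiv.symm_apply_eq]
      exact (can_reach e d k y).symm
    rw [h1, can_reach]

end Canonical

/-- conjugation of permutations by an equivalence, as a `MulEquiv` -/
def permConj {α β : Type*} (φ : α ≃ β) : Perm α ≃* Perm β :=
  { Equiv.permCongr φ with
    map_mul' := fun p q => by
      ext x
      simp [Equiv.permCongr_apply, Perm.mul_apply] }

lemma permConj_apply {α β : Type*} (φ : α ≃ β) (p : Perm α) (x : β) :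
    permConj φ p x = φ (p (φ.symm x)) := rfl

section Pairs

variable {G : Type*} [Group G] {a b : G}

lemma comb (hab : Commute a b) (i j i' j' : ℤ) :
    (a ^ i * b ^ j) * (a ^ i' * b ^ j') = a ^ (i + i') * b ^ (j + j') := by
  have h : Commute (b ^ j) (a ^ i') := (hab.symm.zpow_zpow j i')
  rw [zpow_add, zpow_add]
  calc a ^ i * b ^ j * (a ^ i' * b ^ j') = a ^ i * (b ^ j * a ^ i') * b ^ j' := by group
    _ = a ^ i * (a ^ i' * b ^ j) * b ^ j' := by rw [h.eq]
    _ = a ^ i * a ^ i' * (b ^ j * b ^ j') := by group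

lemma mem_closure_form (hab : Commute a b) :
    ∀ g ∈ Subgroup.closure {a, b}, ∃ i j : ℤ, g = a ^ i * b ^ j := by
  intro g hg
  induction hg using Subgroup.closure_induction with
  | mem x hx =>
      rcases hx with rfl | rfl
      · exact ⟨1, 0, by simp⟩
      · exact ⟨0, 1, by simp⟩
  | one => exact ⟨0, 0, by simp⟩
  | mul x y _ _ hx hy =>
      obtain ⟨i, j, rfl⟩ := hx
      obtain ⟨i', j', rfl⟩ := hy
      exact ⟨i + i', j + j', comb hab i j i' j'⟩
  | inv x _ hx =>
      obtain ⟨i, j, rfl⟩ := hx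
      refine ⟨-i, -j, ?_⟩
      rw [eq_comm, eq_inv_iff_mul_eq_one, comb hab]
      simp

end Pairs

/-- ZMod m is Fin m for m ≠ 0 -/
def zmodFin (m : ℕ) [NeZero m] : ZMod m ≃ Fin m where
  toFun x := ⟨x.val, ZMod.val_lt x⟩
  invFun y := ((y : ℕ) : ZMod m)
  left_inv x := by simp [ZMod.natCast_val, ZMod.cast_id]
  right_inv y := by
    ext
    simp [ZMod.val_natCast, Nat.mod_eq_of_lt y.2]

lemma zmodFin_natCast (m : ℕ) [NeZero m] (x : ZMod m) : ((zmodFin m x : Fin m) : ℕ) = x.val := rfl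

section Reg

variable {n : ℕ} {a b : Perm (Fin n)}

lemma regular (hab : Commute a b)
    (htrans : ∀ y z : Fin n, ∃ g ∈ Subgroup.closure {a, b}, g y = z)
    {g : Perm (Fin n)} (hg : g ∈ Subgroup.closure {a, b}) {x : Fin n} (hx : g x = x) :
    g = 1 := by
  obtain ⟨i, j, rfl⟩ := mem_closure_form hab g hg
  refine Equiv.ext fun y => Eq.trans ?_ (Perm.one_apply y).symm
  obtain ⟨h, hm, hyx⟩ := htrans x y
  obtain ⟨i', j', rfl⟩ := mem_closure_form hab h hm
  calc (a ^ i * b ^ j) y = (a ^ i * b ^ j) ((a ^ i' * b ^ j') x) := by rw [hyx]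
    _ = ((a ^ i * b ^ j) * (a ^ i' * b ^ j')) x := rfl
    _ = ((a ^ i' * b ^ j') * (a ^ i * b ^ j)) x := by rw [comb hab, comb hab, add_comm i i', add_comm j j']
    _ = (a ^ i' * b ^ j') ((a ^ i * b ^ j) x) := rfl
    _ = y := by rw [hx, hyx]

lemma exists_data (hn : 0 < n) (hab : a * b = b * a)
    (htrans : ∀ y z : Fin n, ∃ g ∈ Subgroup.closure {a, b}, g y = z) :
    ∃ (e d k : ℕ) (_ : 0 < e) (_ : 0 < d) (_ : k < e) (_ : e * d = n)
      (φ : Fin n ≃ ZMod e × ZMod d), φ ⟨0, hn⟩ = (0, 0) ∧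
      (∀ p, a (φ.symm p) = φ.symm (canA e d p)) ∧
      (∀ p, b (φ.symm p) = φ.symm (canB e d k p)) := by
  have hab' : Commute a b := hab
  classical
  set x0 : Fin n := ⟨0, hn⟩
  set e := orderOf a with he_def
  have he : 0 < e := orderOf_pos a
  have ha_e : ∀ i : ℤ, a ^ i = 1 ↔ (e : ℤ) ∣ i := fun i =>
    ⟨fun h => orderOf_dvd_iff_zpow_eq_one.mpr h, fun h => orderOf_dvd_iff_zpow_eq_one.mp h⟩
  -- the minimal period d
  set P : ℕ → Prop := fun m => 0 < m ∧ ∃ i : ℤ, a ^ i * b ^ (m : ℤ) = 1 with hP_def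
  have hPex : ∃ m, P m := by
    refine ⟨orderOf b, orderOf_pos b, 0, ?_⟩
    simp [zpow_natCast, pow_orderOf_eq_one]
  set d := Nat.find hPex with hd_def
  have hPd : P d := Nat.find_spec hPex
  have hd : 0 < d := hPd.1
  obtain ⟨k₀, hk₀⟩ := hPd.2
  have hd_min : ∀ m, 0 < m → m < d → ¬∃ i : ℤ, a ^ i * b ^ (m : ℤ) = 1 := by
    intro m hm hmd hex
    exact Nat.find_min hPex hmd ⟨hm, hex⟩
  -- the twist k
  set k : ℕ := ((-k₀) % (e : ℤ)).toNat with hk_def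
  have hk_lt : k < e := by
    have h1 : (-k₀) % (e : ℤ) < e := Int.emod_lt_of_pos _ (by exact_mod_cast he)
    have h2 : 0 ≤ (-k₀) % (e : ℤ) := Int.emod_nonneg _ (by exact_mod_cast he.ne')
    omega
  have hk_cast : ((k : ℕ) : ℤ) = (-k₀) % (e : ℤ) := by
    have h2 : 0 ≤ (-k₀) % (e : ℤ) := Int.emod_nonneg _ (by exact_mod_cast he.ne')
    simp [hk_def, Int.toNat_of_nonneg h2]
  have hrel : b ^ ((d : ℕ) : ℤ) = a ^ ((k : ℕ) : ℤ) := by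
    have h1 : b ^ ((d : ℕ) : ℤ) = a ^ (-k₀) := by
      rw [zpow_neg]
      exact eq_inv_of_mul_eq_one_right hk₀
    rw [h1, ← mul_inv_eq_one, ← zpow_neg, ← zpow_add, ha_e, hk_cast]
    have hdm := Int.mul_ediv_add_emod (-k₀) (e : ℤ)
    exact ⟨(-k₀) / (e : ℤ), by linear_combination -hdm⟩
  have hrel_nat : b ^ (d : ℕ) = a ^ (k : ℕ) := by
    rw [← zpow_natCast b, ← zpow_natCast a]; exact hrel
  haveI : NeZero e := ⟨he.ne'⟩
  haveI : NeZero d := ⟨hd.ne'⟩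
  have hA : a ∈ Subgroup.closure {a, b} := Subgroup.subset_closure (Set.mem_insert _ _)
  have hB : b ∈ Subgroup.closure {a, b} := Subgroup.subset_closure (Set.mem_insert_of_mem _ rfl)
  have hinv : ∀ p q : ℤ, a ^ p * b ^ q = 1 → a ^ (-p) * b ^ (-q) = 1 := by
    intro p q h
    have h2 : (a ^ p * b ^ q) * (a ^ (-p) * b ^ (-q)) = 1 := by
      rw [comb hab']; simp
    rwa [h, one_mul] at h2
  set θ : Fin e × Fin d → Fin n := fun p => (a ^ (p.1 : ℕ) * b ^ (p.2 : ℕ)) x0 with hθ_def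
  have θ_zpow : ∀ p : Fin e × Fin d, θ p = (a ^ ((p.1 : ℕ) : ℤ) * b ^ ((p.2 : ℕ) : ℤ)) x0 := by
    intro p; simp [hθ_def, zpow_natCast]
  have hθ_inj : Function.Injective θ := by
    rintro ⟨i, j⟩ ⟨i', j'⟩ hEq
    have key : a ^ (((i : ℕ) : ℤ) - ((i' : ℕ) : ℤ)) * b ^ (((j : ℕ) : ℤ) - ((j' : ℕ) : ℤ)) = 1 := by
      apply regular hab' htrans (x := θ (i', j'))
      · exact Subgroup.mul_mem _ (Subgroup.zpow_mem _ hA _) (Subgroup.zpow_mem _ hB _)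
      · conv_lhs => rw [θ_zpow, ← Perm.mul_apply, comb hab', sub_add_cancel, sub_add_cancel]
        rw [← θ_zpow ⟨i, j⟩]
        exact hEq
    have hjz : ((j : ℕ) : ℤ) - ((j' : ℕ) : ℤ) = 0 := by
      set w : ℤ := ((j : ℕ) : ℤ) - ((j' : ℕ) : ℤ) with hw_def
      by_contra h0
      have hjlt := j.isLt
      have hj'lt := j'.isLt
      have habs : w.natAbs < d := by omega
      have hpos : 0 < w.natAbs := by omega
      apply hd_min w.natAbs hpos habs
      rcases Int.natAbs_eq w with hw | hw
      · exact ⟨_, by rw [← hw]; exact key⟩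
      · exact ⟨-(((i : ℕ) : ℤ) - ((i' : ℕ) : ℤ)),
          by rw [show ((w.natAbs : ℕ) : ℤ) = -w by omega]; exact hinv _ _ key⟩
    rw [hjz, zpow_zero, mul_one] at key
    have hiz : ((i : ℕ) : ℤ) - ((i' : ℕ) : ℤ) = 0 := by
      refine Int.eq_zero_of_abs_lt_dvd ((ha_e _).mp key) ?_
      have hilt := i.isLt
      have hi'lt := i'.isLt
      rw [abs_lt]; omega
    have h1 : (i : ℕ) = (i' : ℕ) := by omega
    have h2 : (j : ℕ) = (j' : ℕ) := by omega
    exact Prod.ext (Fin.ext h1) (Fin.ext h2)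
  have hθ_surj : Function.Surjective θ := by
    intro z
    obtain ⟨g, hg, hgz⟩ := htrans x0 z
    obtain ⟨i, j, rfl⟩ := mem_closure_form hab' g hg
    set q : ℤ := j / (d : ℤ) with hq_def
    set r : ℤ := j % (d : ℤ) with hr_def
    have hr0 : 0 ≤ r := Int.emod_nonneg _ (by exact_mod_cast hd.ne')
    have hrd : r < (d : ℤ) := Int.emod_lt_of_pos _ (by exact_mod_cast hd)
    set s : ℤ := (i + (k : ℤ) * q) % (e : ℤ) with hs_def
    have hs0 : 0 ≤ s := Int.emod_nonneg _ (by exact_mod_cast he.ne')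
    have hse : s < (e : ℤ) := Int.emod_lt_of_pos _ (by exact_mod_cast he)
    refine ⟨(⟨s.toNat, by omega⟩, ⟨r.toNat, by omega⟩), ?_⟩
    rw [θ_zpow]
    simp only [Int.toNat_of_nonneg hs0, Int.toNat_of_nonneg hr0]
    have hbj : b ^ j = a ^ ((k : ℤ) * q) * b ^ r := by
      have hj : j = (d : ℤ) * q + r := (Int.mul_ediv_add_emod j (d : ℤ)).symm
      rw [hj, zpow_add, zpow_mul, hrel, ← zpow_mul]
    have has : a ^ s = a ^ (i + (k : ℤ) * q) := by
      rw [eq_comm, ← mul_inv_eq_one, ← zpow_neg, ← zpow_add, ha_e]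
      have hdm := Int.mul_ediv_add_emod (i + (k : ℤ) * q) (e : ℤ)
      exact ⟨(i + (k : ℤ) * q) / (e : ℤ), by linear_combination -hdm⟩
    rw [has, ← hgz]
    have : a ^ (i + (k : ℤ) * q) * b ^ r = a ^ i * b ^ j := by
      rw [hbj, zpow_add, mul_assoc]
    rw [this]
  have hbij : Function.Bijective θ := ⟨hθ_inj, hθ_surj⟩
  have hcard : e * d = n := by
    have h := Fintype.card_of_bijective hbij
    simpa using h
  set ζ : ZMod e × ZMod d ≃ Fin e × Fin d := (zmodFin e).prodCongr (zmodFin d) with hζ_def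
  set E : ZMod e × ZMod d ≃ Fin n := ζ.trans (Equiv.ofBijective θ hbij) with hE_def
  have hE_apply : ∀ p, E p = θ (ζ p) := fun p => rfl
  refine ⟨e, d, k, he, hd, hk_lt, hcard, E.symm, ?_, ?_, ?_⟩
  · rw [Equiv.symm_apply_eq, hE_apply]
    show x0 = (a ^ ((0 : ZMod e).val) * b ^ ((0 : ZMod d).val)) x0
    simp [ZMod.val_zero]
  · intro p
    simp only [Equiv.symm_symm, hE_apply]
    show a ((a ^ (p.1.val) * b ^ (p.2.val)) x0) = (a ^ ((p.1 + 1 : ZMod e).val) * b ^ (p.2.val)) x0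
    have hv : (p.1 + 1 : ZMod e).val = (p.1.val + 1) % e := by
      have h1 : (p.1 + 1 : ZMod e) = ((p.1.val + 1 : ℕ) : ZMod e) := by
        push_cast [ZMod.natCast_val, ZMod.cast_id]
        ring
      rw [h1, ZMod.val_natCast]
    rw [hv]
    have hmod : a ^ ((p.1.val + 1) % e) = a ^ (p.1.val + 1) := by
      rw [he_def] at *
      exact pow_mod_orderOf a _
    rw [hmod, ← Perm.mul_apply, ← mul_assoc, ← pow_succ']
  · intro p
    simp only [Equiv.symm_symm, hE_apply]
    show b ((a ^ (p.1.val) * b ^ (p.2.val)) x0) =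
      (a ^ ((p.1 + if p.2 + 1 = 0 then (k : ZMod e) else 0 : ZMod e).val) * b ^ ((p.2 + 1 : ZMod d).val)) x0
    have hv2 : (p.2 + 1 : ZMod d).val = (p.2.val + 1) % d := by
      have h1 : (p.2 + 1 : ZMod d) = ((p.2.val + 1 : ℕ) : ZMod d) := by
        push_cast [ZMod.natCast_val, ZMod.cast_id]
        ring
      rw [h1, ZMod.val_natCast]
    have hcond : ((p.2 + 1 : ZMod d) = 0) ↔ (p.2.val + 1 = d) := by
      constructor
      · intro h
        have h2 : (p.2.val + 1) % d = 0 := by rw [← hv2, h, ZMod.val_zero]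
        have := ZMod.val_lt p.2
        have := Nat.dvd_of_mod_eq_zero h2
        have h3 := Nat.le_of_dvd (by omega) this
        omega
      · intro h
        have h1 : (p.2 + 1 : ZMod d) = ((p.2.val + 1 : ℕ) : ZMod d) := by
          push_cast [ZMod.natCast_val, ZMod.cast_id]
          ring
        rw [h1, h, ZMod.natCast_self]
    have hswap : b * (a ^ p.1.val * b ^ p.2.val) = a ^ p.1.val * b ^ (p.2.val + 1) := by
      have hc : Commute b (a ^ p.1.val) := (hab'.symm.pow_right _)
      rw [← mul_assoc, hc.eq, mul_assoc, ← pow_succ']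
    by_cases hcc : (p.2 + 1 : ZMod d) = 0
    · rw [if_pos hcc]
      have hd1 : p.2.val + 1 = d := hcond.mp hcc
      have hval : (p.1 + (k : ZMod e)).val = (p.1.val + k) % e := by
        have h1 : (p.1 + (k : ZMod e)) = ((p.1.val + k : ℕ) : ZMod e) := by
          push_cast [ZMod.natCast_val, ZMod.cast_id]
          ring
        ring
        rw [h1, ZMod.val_natCast]
      rw [hval, hv2, hd1, Nat.mod_self, pow_zero, mul_one]
      have hmod : a ^ ((p.1.val + k) % e) = a ^ (p.1.val + k) := by
        rw [he_def] at *
        exact pow_mod_orderOf a _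
      rw [hmod, ← Perm.mul_apply, hswap, hd1, hrel_nat, ← pow_add]
    · rw [if_neg hcc]
      have hne : p.2.val + 1 ≠ d := fun h => hcc (hcond.mpr h)
      have := ZMod.val_lt p.2
      have hlt : p.2.val + 1 < d := by omega
      rw [hv2, Nat.mod_eq_of_lt hlt, add_zero, ← Perm.mul_apply, hswap]

end Reg

lemma fib_equiv {n : ℕ} (hn : 0 < n) (M : Type*) [Fintype M] [DecidableEq M]
    (hM : Fintype.card M = n) (x : Fin n) (y : M) :
    Nonempty ({φ : Fin n ≃ M // φ x = y} ≃ Fin ((n - 1).factorial)) := by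
  obtain ⟨m, rfl⟩ := Nat.exists_eq_succ_of_ne_zero hn.ne'
  have hcard : Fintype.card M = Fintype.card (Fin (m + 1)) := by simp [hM]
  set χ : Fin (m + 1) ≃ M := (Fintype.equivOfCardEq hcard).symm with hχ
  set ψ : Fin (m + 1) ≃ M := χ.trans (Equiv.swap (χ x) y) with hψ_def
  have hψ : ψ x = y := by simp [hψ_def, Equiv.swap_apply_left]
  let E1 : {φ : Fin (m + 1) ≃ M // φ x = y} ≃ {σ : Perm (Fin (m + 1)) // σ x = x} :=
  { toFun := fun φ => ⟨φ.1.trans ψ.symm, by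
      rw [Equiv.trans_apply, φ.2, Equiv.symm_apply_eq, hψ]⟩
    invFun := fun σ => ⟨σ.1.trans ψ, by rw [Equiv.trans_apply, σ.2, hψ]⟩
    left_inv := fun φ => Subtype.ext (by ext z; simp)
    right_inv := fun σ => Subtype.ext (by ext z; simp) }
  let s : Perm (Fin (m + 1)) := Equiv.swap x 0
  let E2 : {σ : Perm (Fin (m + 1)) // σ x = x} ≃ {σ : Perm (Fin (m + 1)) // σ 0 = 0} :=
  { toFun := fun σ => ⟨s.permCongr σ.1, by
      simp only [Equiv.permCongr_apply, s, Equiv.symm_swap, Equiv.swap_apply_right, σ.2,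
        Equiv.swap_apply_left]⟩
    invFun := fun σ => ⟨s.permCongr σ.1, by
      simp only [Equiv.permCongr_apply, s, Equiv.symm_swap, Equiv.swap_apply_left, σ.2,
        Equiv.swap_apply_right]⟩
    left_inv := fun σ => Subtype.ext (by ext z; simp [Equiv.permCongr_apply, s])
    right_inv := fun σ => Subtype.ext (by ext z; simp [Equiv.permCongr_apply, s]) }
  let E3 : {σ : Perm (Fin (m + 1)) // σ 0 = 0} ≃ Perm (Fin m) :=
  { toFun := fun σ => (Equiv.Perm.decomposeFin σ.1).2
    invFun := fun τ => ⟨Equiv.Perm.decomposeFin.symm (0, τ),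
      Equiv.Perm.decomposeFin_symm_apply_zero 0 τ⟩
    left_inv := fun σ => by
      apply Subtype.ext
      have h1 : (Equiv.Perm.decomposeFin σ.1).1 = σ.1 0 := by
        conv_rhs => rw [← Equiv.symm_apply_apply Equiv.Perm.decomposeFin σ.1]
        rw [show Equiv.Perm.decomposeFin σ.1 =
          ((Equiv.Perm.decomposeFin σ.1).1, (Equiv.Perm.decomposeFin σ.1).2) from rfl]
        rw [Equiv.Perm.decomposeFin_symm_apply_zero]
      have h2 : (Equiv.Perm.decomposeFin σ.1).1 = 0 := by rw [h1, σ.2]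
      calc Equiv.Perm.decomposeFin.symm (0, (Equiv.Perm.decomposeFin σ.1).2)
          = Equiv.Perm.decomposeFin.symm
            ((Equiv.Perm.decomposeFin σ.1).1, (Equiv.Perm.decomposeFin σ.1).2) := by rw [h2]
        _ = σ.1 := Equiv.symm_apply_apply _ _
    right_inv := fun τ => by simp }
  refine ⟨(E1.trans (E2.trans E3)).trans (Fintype.equivFinOfCardEq ?_)⟩
  simp [Fintype.card_perm]

section Main

variable (n : ℕ) (hn : 0 < n)

def TT : Type :=
  Σ _e : {e : ℕ // e ∈ n.divisors},
    Σ _k : Fin _e.1, {φ : Fin n ≃ ZMod _e.1 × ZMod (n / _e.1) // φ ⟨0, hn⟩ = (0, 0)}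

def SS : Type := {x : Perm (Fin n) × Perm (Fin n) //
    x.1 * x.2 = x.2 * x.1 ∧
    ∀ y z : Fin n, ∃ g ∈ Subgroup.closure {x.1, x.2}, g y = z}

lemma divisor_pos {e : ℕ} (he : e ∈ n.divisors) : 0 < e ∧ 0 < n / e := by
  have h1 := Nat.pos_of_mem_divisors he
  have h2 := (Nat.mem_divisors.mp he).1
  have h3 := (Nat.mem_divisors.mp he).2
  exact ⟨h1, Nat.div_pos (Nat.le_of_dvd (Nat.pos_of_ne_zero h3) h2) h1⟩

def Ψ (t : TT n hn) : SS n := by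
  obtain ⟨⟨e, he⟩, ⟨k, hk⟩, ⟨φ, hφ⟩⟩ := t
  haveI : NeZero e := ⟨(divisor_pos n he).1.ne'⟩
  haveI : NeZero (n / e) := ⟨(divisor_pos n he).2.ne'⟩
  refine ⟨(permConj φ.symm (canA e (n / e)), permConj φ.symm (canB e (n / e) k)), ?_, ?_⟩
  · rw [← map_mul, ← map_mul, canAB_comm]
  · intro y z
    obtain ⟨g, hg, hgy⟩ := can_trans e (n / e) k (φ y) (φ z)
    refine ⟨permConj φ.symm g, ?_, ?_⟩
    · have h1 := Subgroup.mem_map_of_mem (G := Perm (ZMod e × ZMod (n / e)))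
        (permConj φ.symm).toMonoidHom hg
      rw [MonoidHom.map_closure] at h1
      have h2 : (permConj φ.symm).toMonoidHom ''
          {canA e (n / e), canB e (n / e) k} =
          {permConj φ.symm (canA e (n / e)), permConj φ.symm (canB e (n / e) k)} := by
        rw [Set.image_insert_eq, Set.image_singleton]; rfl
      rwa [h2] at h1
    · show φ.symm (g (φ.symm.symm y)) = z
      rw [Equiv.symm_symm, hgy, Equiv.symm_apply_apply]

lemma Ψ_surj : Function.Surjective (Ψ n hn) := by
  rintro ⟨⟨a, b⟩, hab, htrans⟩
  obtain ⟨e, d, k, he, hd, hk, hcard, φ, hφ0, hA, hB⟩ := exists_data hn hab htrans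
  have hdiv : e ∈ n.divisors := Nat.mem_divisors.mpr ⟨⟨d, hcard.symm⟩, hn.ne'⟩
  have hde : n / e = d := by rw [← hcard, Nat.mul_div_cancel_left _ he]
  subst hde
  refine ⟨⟨⟨e, hdiv⟩, ⟨k, hk⟩, ⟨φ, hφ0⟩⟩, ?_⟩
  apply Subtype.ext
  show (_, _) = (a, b)
  have ha : permConj φ.symm (canA e (n / e)) = a := by
    apply Equiv.ext; intro y
    rw [permConj_apply, Equiv.symm_symm, ← hA, Equiv.symm_apply_apply]
  have hb : permConj φ.symm (canB e (n / e) k) = b := by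
    apply Equiv.ext; intro y
    rw [permConj_apply, Equiv.symm_symm, ← hB, Equiv.symm_apply_apply]
  rw [ha, hb]

lemma Ψ_inj : Function.Injective (Ψ n hn) := by
  rintro ⟨⟨e1, he1⟩, ⟨k1, hk1⟩, ⟨φ1, hφ1⟩⟩ ⟨⟨e2, he2⟩, ⟨k2, hk2⟩, ⟨φ2, hφ2⟩⟩ h
  haveI : NeZero e1 := ⟨(divisor_pos n he1).1.ne'⟩
  haveI : NeZero (n / e1) := ⟨(divisor_pos n he1).2.ne'⟩
  haveI : NeZero e2 := ⟨(divisor_pos n he2).1.ne'⟩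
  haveI : NeZero (n / e2) := ⟨(divisor_pos n he2).2.ne'⟩
  have ha : permConj φ1.symm (canA e1 (n / e1)) = permConj φ2.symm (canA e2 (n / e2)) :=
    congrArg (fun s : SS n => s.1.1) h
  have hb : permConj φ1.symm (canB e1 (n / e1) k1) = permConj φ2.symm (canB e2 (n / e2) k2) :=
    congrArg (fun s : SS n => s.1.2) h
  -- e1 = e2
  have he_eq : e1 = e2 := by
    have o1 : orderOf (permConj φ1.symm (canA e1 (n / e1))) = e1 := by
      rw [MulEquiv.orderOf_eq, orderOf_canA]
    have o2 : orderOf (permConj φ2.symm (canA e2 (n / e2))) = e2 := by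
      rw [MulEquiv.orderOf_eq, orderOf_canA]
    rw [← o1, ← o2, ha]
  subst he_eq
  have hu0 : φ1 (φ2.symm (0, 0)) = (0, 0) := by
    have h1 : φ2.symm (0, 0) = ⟨0, hn⟩ := by rw [← hφ2, Equiv.symm_apply_apply]
    rw [h1, hφ1]
  have hpt : ∀ (X Y : Perm (ZMod e1 × ZMod (n / e1))),
      permConj φ1.symm X = permConj φ2.symm Y →
      ∀ p, φ1 (φ2.symm (Y p)) = X (φ1 (φ2.symm p)) := by
    intro X Y hXY p
    have h1 := congrArg (fun (σ : Perm (Fin n)) => φ1 (σ (φ2.symm p))) hXY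
    simp only [permConj_apply, Equiv.symm_symm, Equiv.apply_symm_apply,
      Equiv.symm_apply_apply] at h1
    exact h1.symm
  have hptpow : ∀ (X Y : Perm (ZMod e1 × ZMod (n / e1))),
      (∀ p, φ1 (φ2.symm (Y p)) = X (φ1 (φ2.symm p))) →
      ∀ (m : ℕ) (p), φ1 (φ2.symm ((Y ^ m) p)) = (X ^ m) (φ1 (φ2.symm p)) := by
    intro X Y hXY m
    induction m with
    | zero => intro p; simp
    | succ m ih =>
        intro p
        rw [pow_succ', pow_succ', Perm.mul_apply, Perm.mul_apply, hXY, ih]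
  have hU : ∀ p, φ1 (φ2.symm p) = p := by
    intro p
    conv_lhs => rw [← can_reach e1 (n / e1) k2 p]
    rw [Perm.mul_apply]
    rw [hptpow _ _ (hpt _ _ ha) _ _]
    rw [hptpow _ _ (hpt _ _ hb) _ _]
    rw [hu0]
    have hB12 : ∀ k' : ℕ, (canB e1 (n / e1) k' ^ (p.2.val)) ((0 : ZMod e1), (0 : ZMod (n / e1)))
        = (0, (p.2.val : ZMod (n / e1))) := by
      intro k'
      rw [canB_pow]
      simp [Nat.div_eq_of_lt (ZMod.val_lt p.2)]
    rw [hB12, ← hB12 k2]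
    exact can_reach e1 (n / e1) k2 p
  have hφeq : φ1 = φ2 := by
    apply Equiv.ext; intro x
    have h1 := hU (φ2 x)
    rwa [Equiv.symm_apply_apply] at h1
  subst hφeq
  have hBeq : canB e1 (n / e1) k1 = canB e1 (n / e1) k2 :=
    (permConj φ1.symm).injective hb
  have hk_eq : k1 = k2 := by
    have h1 := congrArg (fun σ : Perm (ZMod e1 × ZMod (n / e1)) =>
      (σ ((0 : ZMod e1), (-1 : ZMod (n / e1)))).1) hBeq
    simp only [canB_apply, neg_add_cancel, if_pos, zero_add] at h1
    rw [← ZMod.val_cast_of_lt hk1, ← ZMod.val_cast_of_lt hk2, h1]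
  subst hk_eq
  rfl

end Main

/-- The number of pairs (a,b) of commuting permutations in Sₙ generating a transitive
subgroup equals (n−1)! · σ₁(n). -/
theorem commuting_transitive_pairs_count (n : ℕ) (hn : 0 < n) :
    Nat.card {x : Perm (Fin n) × Perm (Fin n) //
        x.1 * x.2 = x.2 * x.1 ∧
        ∀ y z : Fin n, ∃ g ∈ Subgroup.closure {x.1, x.2}, g y = z} =
      (n - 1).factorial * ∑ d ∈ n.divisors, d := by
  classical
  have h1 : Nat.card (SS n) = Nat.card (TT n hn) :=
    (Nat.card_congr (Equiv.ofBijective _ ⟨Ψ_inj n hn, Ψ_surj n hn⟩)).symm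
  have hfib : ∀ E : {e : ℕ // e ∈ n.divisors},
      Nonempty ({φ : Fin n ≃ ZMod E.1 × ZMod (n / E.1) // φ ⟨0, hn⟩ = (0, 0)} ≃
        Fin ((n - 1).factorial)) := by
    intro E
    haveI : NeZero E.1 := ⟨(divisor_pos n E.2).1.ne'⟩
    haveI : NeZero (n / E.1) := ⟨(divisor_pos n E.2).2.ne'⟩
    apply fib_equiv hn
    rw [Fintype.card_prod, ZMod.card, ZMod.card]
    exact Nat.mul_div_cancel' (Nat.mem_divisors.mp E.2).1
  have h2 : Nat.card (TT n hn) =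
      Nat.card (Σ _E : {e : ℕ // e ∈ n.divisors}, Σ _k : Fin _E.1, Fin ((n - 1).factorial)) :=
    Nat.card_congr
      (Equiv.sigmaCongrRight fun E => Equiv.sigmaCongrRight fun _k => Classical.choice (hfib E))
  show Nat.card (SS n) = _
  rw [h1, h2, Nat.card_eq_fintype_card, Fintype.card_sigma]
  have h3 : ∀ E : {e : ℕ // e ∈ n.divisors},
      Fintype.card (Σ _k : Fin E.1, Fin ((n - 1).factorial)) = E.1 * (n - 1).factorial := by
    intro E
    simp [Fintype.card_sigma, Finset.sum_const]
  rw [Finset.sum_congr rfl (fun E _ => h3 E)]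
  rw [Finset.sum_coe_sort n.divisors (fun e => e * (n - 1).factorial)]
  rw [← Finset.sum_mul, mul_comm]
end

section
/- For every h ≥ 0 and every even integer r ≥ 2, the number of orbits of the simultaneous-conjugation action of S₃ on the tuples counted by T_{3,h,r} satisfies, as an identity of rational numbers, N_{3,h,r} = 2^{2h−1} · (3^{2h−2+r} − 1); equivalently 2 · N_{3,h,r} = 2^{2h}(3^{2h+r−2} − 1). -/
open Equiv
open scoped commutatorElement

abbrev TupleSpace (n h r : ℕ) : Type :=
  (Fin h → Perm (Fin n)) × (Fin h → Perm (Fin n)) × (Fin r → Perm (Fin n))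

/-- Tuples (a,b,τ) with each τₚ a transposition and [a₁,b₁]⋯[a_h,b_h]·τ₁⋯τ_r = 1. -/
def IsHurwitzTuple {n h r : ℕ} (x : TupleSpace n h r) : Prop :=
  (∀ p, (x.2.2 p).IsSwap) ∧
    (List.ofFn fun i => ⁅x.1 i, x.2.1 i⁆).prod * (List.ofFn x.2.2).prod = 1

/-- Hurwitz tuples generating a transitive subgroup of Sₙ. -/
def IsTransTuple {n h r : ℕ} (x : TupleSpace n h r) : Prop :=
  IsHurwitzTuple x ∧
    ∀ y z : Fin n, ∃ g ∈ Subgroup.closure (Set.range x.1 ∪ Set.range x.2.1 ∪ Set.range x.2.2),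
      g y = z

/-- B_{n,h,r}: number of Hurwitz tuples (no transitivity required). -/
noncomputable def Bcount (n h r : ℕ) : ℕ :=
  Nat.card {x : TupleSpace n h r // IsHurwitzTuple x}

/-- T_{n,h,r}: number of transitive Hurwitz tuples. -/
noncomputable def Tcount (n h r : ℕ) : ℕ :=
  Nat.card {x : TupleSpace n h r // IsTransTuple x}

/-- Simultaneous conjugation relation on transitive Hurwitz tuples. -/
def ConjRel {n h r : ℕ} (x y : {x : TupleSpace n h r // IsTransTuple x}) : Prop :=
  ∃ g : Perm (Fin n),
    (∀ i, g * x.1.1 i * g⁻¹ = y.1.1 i) ∧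
    (∀ i, g * x.1.2.1 i * g⁻¹ = y.1.2.1 i) ∧
    (∀ p, g * x.1.2.2 p * g⁻¹ = y.1.2.2 p)

/-- N_{n,h,r}: number of orbits of the simultaneous-conjugation action of Sₙ
on transitive Hurwitz tuples. -/
noncomputable def NOrb (n h r : ℕ) : ℕ :=
  Nat.card {s : Set {x : TupleSpace n h r // IsTransTuple x} // ∃ x, s = {y | ConjRel x y}}

instance : DecidablePred (Equiv.Perm.IsSwap (α := Fin 3)) :=
  fun g => decidable_of_iff (∃ x y, x ≠ y ∧ g = Equiv.swap x y) Iff.rfl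

def Cset (r : ℕ) (g : Perm (Fin 3)) : Type :=
  {t : Fin r → Perm (Fin 3) // (∀ p, (t p).IsSwap) ∧ (List.ofFn t).prod = g}

noncomputable def Cc (r : ℕ) (g : Perm (Fin 3)) : ℕ := Nat.card (Cset r g)

instance (r g) : Finite (Cset r g) := by unfold Cset; infer_instance

def csplit (r : ℕ) (g : Perm (Fin 3)) :
    Cset (r+1) g ≃ Σ t : {t : Perm (Fin 3) // t.IsSwap}, Cset r (t.1⁻¹ * g) where
  toFun x := ⟨⟨x.1 0, x.2.1 0⟩, Fin.tail x.1, fun p => x.2.1 p.succ, by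
    have hx := x.2.2
    rw [List.ofFn_succ, List.prod_cons] at hx
    show (List.ofFn fun i => x.1 i.succ).prod = _
    exact eq_inv_mul_iff_mul_eq.2 hx⟩
  invFun y := ⟨Fin.cons y.1.1 y.2.1, by
    refine ⟨fun p => ?_, ?_⟩
    · refine Fin.cases ?_ ?_ p
      · exact y.1.2
      · intro i; simpa using y.2.2.1 i
    · rw [List.ofFn_succ, List.prod_cons]
      simp only [Fin.cons_zero, Fin.cons_succ]
      have h2 : (List.ofFn fun i : Fin r => y.2.1 i) = List.ofFn y.2.1 := rfl
      rw [h2, y.2.2.2]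
      group⟩
  left_inv x := by
    apply Subtype.ext
    exact Fin.cons_self_tail x.1
  right_inv y := by
    rcases y with ⟨⟨t, ht⟩, ⟨f, hf⟩⟩
    refine Sigma.ext rfl ?_
    simp [Fin.tail_cons]
    exact HEq.rfl


lemma nat_card_sigma {ι : Type*} [Fintype ι] (f : ι → Type*) [∀ i, Finite (f i)] :
    Nat.card (Σ i, f i) = ∑ i, Nat.card (f i) := by
  have := fun i => Fintype.ofFinite (f i)
  simp only [Nat.card_eq_fintype_card]
  exact Fintype.card_sigma

lemma swap_parity : ∀ t g : Perm (Fin 3), t.IsSwap → (g.IsSwap ↔ ¬(t⁻¹ * g).IsSwap) := by decide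

lemma Cc_succ (r : ℕ) (g : Perm (Fin 3)) :
    Cc (r+1) g = ∑ t : {t : Perm (Fin 3) // t.IsSwap}, Cc r (t.1⁻¹ * g) := by
  rw [Cc, Nat.card_congr (csplit r g), nat_card_sigma]; rfl

lemma Cc_one (g : Perm (Fin 3)) : Cc 1 g = if g.IsSwap then 1 else 0 := by
  by_cases hg : g.IsSwap
  · rw [if_pos hg]
    have : Unique (Cset 1 g) := by
      refine ⟨⟨⟨fun _ => g, fun p => hg, by simp⟩⟩, ?_⟩
      rintro ⟨t, ht, htp⟩
      apply Subtype.ext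
      funext i
      have h0 : i = 0 := Subsingleton.elim _ _
      subst h0
      simpa using htp
    exact Nat.card_unique
  · rw [if_neg hg]
    have : IsEmpty (Cset 1 g) := by
      refine ⟨?_⟩
      rintro ⟨t, ht, htp⟩
      apply hg
      have hg2 : t 0 = g := by simpa using htp
      rw [← hg2]; exact ht 0
    exact Nat.card_of_isEmpty

lemma Cc_formula : ∀ r, 1 ≤ r → ∀ g : Perm (Fin 3),
    Cc r g = if Even r ↔ g.IsSwap then 0 else 3 ^ (r - 1) := by
  intro r
  induction r with
  | zero => omega
  | succ n ih =>
    intro _ g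
    rcases Nat.eq_zero_or_pos n with h0 | h0
    · subst h0
      rw [Cc_one]
      by_cases hg : g.IsSwap <;> simp [hg]
    · have hn : 1 ≤ n := h0
      rw [Cc_succ]
      have key : ∀ t : {t : Perm (Fin 3) // t.IsSwap},
          Cc n (t.1⁻¹ * g) = if Even n ↔ ¬ g.IsSwap then 0 else 3 ^ (n-1) := by
        intro t
        rw [ih hn]
        have := swap_parity t.1 g t.2
        by_cases hg : g.IsSwap <;> by_cases he : Even n <;> simp_all
      rw [Finset.sum_congr rfl (fun t _ => key t), Finset.sum_const, smul_eq_mul,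
        Finset.card_univ]
      have h3 : Fintype.card {t : Perm (Fin 3) // t.IsSwap} = 3 := by decide
      rw [h3]
      have hpow : 3 * 3 ^ (n-1) = 3 ^ n := by
        rw [← pow_succ']; congr 1; omega
      have hpar : Even (n+1) ↔ ¬ Even n := Nat.even_add_one
      have hn1 : n + 1 - 1 = n := rfl
      by_cases hg : g.IsSwap <;> by_cases he : Even n <;>
        simp only [hpar, hg, he, hn1, iff_true, iff_false, not_true, not_false_iff,
          if_true, if_false, mul_zero] <;> simp [hpow, he]

def Dset (h : ℕ) (g : Perm (Fin 3)) : Type :=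
  {ab : (Fin h → Perm (Fin 3)) × (Fin h → Perm (Fin 3)) //
    (List.ofFn fun i => ⁅ab.1 i, ab.2 i⁆).prod = g}

noncomputable def Dc (h : ℕ) (g : Perm (Fin 3)) : ℕ := Nat.card (Dset h g)

instance (h g) : Finite (Dset h g) := by unfold Dset; infer_instance

def dsplit (h : ℕ) (g : Perm (Fin 3)) :
    Dset (h+1) g ≃ Σ p : Perm (Fin 3) × Perm (Fin 3), Dset h (⁅p.1, p.2⁆⁻¹ * g) where
  toFun x := ⟨(x.1.1 0, x.1.2 0), ⟨(Fin.tail x.1.1, Fin.tail x.1.2), by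
    have hx := x.2
    rw [List.ofFn_succ, List.prod_cons] at hx
    exact eq_inv_mul_iff_mul_eq.2 hx⟩⟩
  invFun y := ⟨(Fin.cons y.1.1 y.2.1.1, Fin.cons y.1.2 y.2.1.2), by
    rw [List.ofFn_succ, List.prod_cons]
    simp only [Fin.cons_zero, Fin.cons_succ]
    rw [y.2.2]
    group⟩
  left_inv x := by
    apply Subtype.ext
    exact Prod.ext (Fin.cons_self_tail x.1.1) (Fin.cons_self_tail x.1.2)
  right_inv y := by
    rcases y with ⟨⟨a, b⟩, ⟨⟨f1, f2⟩, hf⟩⟩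
    refine Sigma.ext rfl ?_
    simp [Fin.tail_cons]
    exact HEq.rfl

lemma Dc_succ (h : ℕ) (g : Perm (Fin 3)) :
    Dc (h+1) g = ∑ p : Perm (Fin 3) × Perm (Fin 3), Dc h (⁅p.1, p.2⁆⁻¹ * g) := by
  rw [Dc, Nat.card_congr (dsplit h g), nat_card_sigma]; rfl

lemma comm_parity : ∀ a b g : Perm (Fin 3), g.IsSwap → (⁅a,b⁆⁻¹ * g).IsSwap := by decide

lemma Dc_swap (h : ℕ) : ∀ g : Perm (Fin 3), g.IsSwap → Dc h g = 0 := by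
  induction h with
  | zero =>
    intro g hg
    have : IsEmpty (Dset 0 g) := by
      refine ⟨?_⟩
      rintro ⟨ab, hab⟩
      simp only [List.ofFn_zero, List.prod_nil] at hab
      rw [← hab] at hg
      revert hg; decide
    exact Nat.card_of_isEmpty
  | succ n ih =>
    intro g hg
    rw [Dc_succ]
    refine Finset.sum_eq_zero fun p _ => ih _ (comm_parity p.1 p.2 g hg)

lemma sum_Dc (h : ℕ) : ∑ g : Perm (Fin 3), Dc h g = 36 ^ h := by
  have e := Equiv.sigmaFiberEquiv
    (fun ab : (Fin h → Perm (Fin 3)) × (Fin h → Perm (Fin 3)) =>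
      (List.ofFn fun i => ⁅ab.1 i, ab.2 i⁆).prod)
  have : ∑ g : Perm (Fin 3), Dc h g =
      Nat.card ((Fin h → Perm (Fin 3)) × (Fin h → Perm (Fin 3))) := by
    rw [← Nat.card_congr e, nat_card_sigma]; rfl
  rw [this, Nat.card_eq_fintype_card, Fintype.card_prod, Fintype.card_fun]
  have h6 : Fintype.card (Perm (Fin 3)) = 6 := by rw [Fintype.card_perm]; rfl
  rw [h6, Fintype.card_fin, ← mul_pow]; norm_num




def bsplit (h r : ℕ) :
    {x : TupleSpace 3 h r // IsHurwitzTuple x} ≃ Σ g : Perm (Fin 3), Dset h g × Cset r g⁻¹ where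
  toFun x := ⟨(List.ofFn fun i => ⁅x.1.1 i, x.1.2.1 i⁆).prod,
    ⟨(x.1.1, x.1.2.1), rfl⟩,
    ⟨x.1.2.2, x.2.1, eq_inv_of_mul_eq_one_right x.2.2⟩⟩
  invFun y := ⟨(y.2.1.1.1, y.2.1.1.2, y.2.2.1), y.2.2.2.1, by
    show (List.ofFn fun i => ⁅y.2.1.1.1 i, y.2.1.1.2 i⁆).prod * (List.ofFn y.2.2.1).prod = 1
    rw [y.2.1.2, y.2.2.2.2]
    group⟩
  left_inv x := rfl
  right_inv y := by
    rcases y with ⟨g, ⟨ab, hab⟩, ⟨t, ht, htp⟩⟩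
    subst hab
    rfl

lemma inv_swap_iff : ∀ g : Perm (Fin 3), g⁻¹.IsSwap ↔ g.IsSwap := by decide

lemma Bval (h r : ℕ) (hr : 1 ≤ r) (hre : Even r) :
    Bcount 3 h r = 3 ^ (r - 1) * 36 ^ h := by
  rw [Bcount, Nat.card_congr (bsplit h r), nat_card_sigma]
  have step : ∀ g : Perm (Fin 3),
      Nat.card (Dset h g × Cset r g⁻¹) = Dc h g * 3 ^ (r - 1) := by
    intro g
    rw [Nat.card_prod]
    by_cases hg : g.IsSwap
    · rw [show Nat.card (Dset h g) = Dc h g from rfl, Dc_swap h g hg]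
      simp
    · rw [show Nat.card (Cset r g⁻¹) = Cc r g⁻¹ from rfl, Cc_formula r hr]
      rw [if_neg]
      · rfl
      · rw [inv_swap_iff]
        simp [hre, hg]
  rw [Finset.sum_congr rfl (fun g _ => step g), ← Finset.sum_mul, sum_Dc]
  ring

def FixAll {h r : ℕ} (x : TupleSpace 3 h r) (k : Fin 3) : Prop :=
  (∀ i, x.1 i k = k) ∧ (∀ i, x.2.1 i k = k) ∧ (∀ p, x.2.2 p k = k)

lemma fin3_aux : ∀ y z a b : Fin 3, y ≠ z → a ≠ y → a ≠ z → b ≠ z → b ≠ y → a = b := by decide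

lemma transCond_iff_not_fix {h r : ℕ} (x : TupleSpace 3 h r) :
    (∀ y z : Fin 3, ∃ g ∈ Subgroup.closure
        (Set.range x.1 ∪ Set.range x.2.1 ∪ Set.range x.2.2), g y = z) ↔
      ¬ ∃ k, FixAll x k := by
  set S := Set.range x.1 ∪ Set.range x.2.1 ∪ Set.range x.2.2 with hS
  constructor
  · rintro htr ⟨k, hk⟩
    have hsub : Subgroup.closure S ≤ MulAction.stabilizer (Perm (Fin 3)) k := by
      rw [Subgroup.closure_le]
      rintro g (⟨⟨i, rfl⟩ | ⟨i, rfl⟩⟩ | ⟨p, rfl⟩)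
      · exact hk.1 i
      · exact hk.2.1 i
      · exact hk.2.2 p
    obtain ⟨g, hg, hgk⟩ := htr k (k + 1)
    have : g k = k := hsub hg
    rw [this] at hgk
    revert hgk
    exact fun hgk => (by decide : ∀ k : Fin 3, ¬ k = k + 1) k hgk
  · intro hnf y z
    have hmv : ∀ k : Fin 3, ∃ g ∈ Subgroup.closure S, g k ≠ k := by
      intro k
      by_contra hc
      push_neg at hc
      refine hnf ⟨k, ?_, ?_, ?_⟩
      · exact fun i => hc _ (Subgroup.subset_closure (Or.inl (Or.inl ⟨i, rfl⟩)))
      · exact fun i => hc _ (Subgroup.subset_closure (Or.inl (Or.inr ⟨i, rfl⟩)))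
      · exact fun p => hc _ (Subgroup.subset_closure (Or.inr ⟨p, rfl⟩))
    set rel : Fin 3 → Fin 3 → Prop := fun a b => ∃ g ∈ Subgroup.closure S, g a = b with hrel
    have hrefl : ∀ a, rel a a := fun a => ⟨1, one_mem _, rfl⟩
    have hsymm : ∀ a b, rel a b → rel b a := by
      rintro a b ⟨g, hg, rfl⟩
      exact ⟨g⁻¹, inv_mem hg, by simp⟩
    have htrans : ∀ a b c, rel a b → rel b c → rel a c := by
      rintro a b c ⟨g, hg, rfl⟩ ⟨g', hg', rfl⟩
      exact ⟨g' * g, mul_mem hg' hg, rfl⟩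
    have hmv' : ∀ k : Fin 3, ∃ b, b ≠ k ∧ rel k b := by
      intro k
      obtain ⟨g, hg, hgk⟩ := hmv k
      exact ⟨g k, hgk, g, hg, rfl⟩
    show rel y z
    by_cases hyz : y = z
    · subst hyz; exact hrefl y
    · obtain ⟨a, ha, hya⟩ := hmv' y
      obtain ⟨b, hb, hzb⟩ := hmv' z
      by_cases h1 : a = z
      · subst h1; exact hya
      · by_cases h2 : b = y
        · subst h2; exact hsymm _ _ hzb
        · have hab : a = b := fin3_aux y z a b hyz ha h1 hb h2
          subst hab
          exact htrans _ _ _ hya (hsymm _ _ hzb)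

def swapAway (k : Fin 3) : Perm (Fin 3) := Equiv.swap (k+1) (k+2)

lemma fA1 : ∀ k, (swapAway k).IsSwap := by decide
lemma fA2 : ∀ k (t : Perm (Fin 3)), t.IsSwap → t k = k → t = swapAway k := by decide
lemma fA3 : ∀ k, swapAway k ^ 2 = 1 := by decide
lemma fA4 : ∀ (k : Fin 3) (a b : Perm (Fin 3)), a k = k → b k = k → ⁅a,b⁆ = 1 := by decide
lemma fA5 : ∀ k, swapAway k k = k := by decide

def FixSet (h r : ℕ) (k : Fin 3) : Type :=
  {x : TupleSpace 3 h r // IsHurwitzTuple x ∧ FixAll x k}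

instance (h r k) : Finite (FixSet h r k) := by unfold FixSet; infer_instance

def fixEquiv (h r : ℕ) (k : Fin 3) (hre : Even r) :
    FixSet h r k ≃ (Fin h → {g : Perm (Fin 3) // g k = k}) × (Fin h → {g : Perm (Fin 3) // g k = k}) where
  toFun x := (fun i => ⟨x.1.1 i, x.2.2.1 i⟩, fun i => ⟨x.1.2.1 i, x.2.2.2.1 i⟩)
  invFun f := ⟨(fun i => (f.1 i).1, fun i => (f.2 i).1, fun _ => swapAway k), by
    refine ⟨fun p => fA1 k, ?_⟩
    have e1 : (List.ofFn fun i : Fin h => ⁅(f.1 i).1, (f.2 i).1⁆) =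
        List.ofFn (fun _ : Fin h => (1 : Perm (Fin 3))) := by
      congr 1
      funext i
      exact fA4 k _ _ (f.1 i).2 (f.2 i).2
    show ((List.ofFn fun i : Fin h => ⁅(f.1 i).1, (f.2 i).1⁆).prod *
        (List.ofFn fun _ : Fin r => swapAway k).prod = 1)
    rw [e1, List.ofFn_const, List.ofFn_const, List.prod_replicate, List.prod_replicate, one_pow]
    obtain ⟨m, hm⟩ := hre
    rw [hm, ← two_mul, pow_mul, fA3, one_pow, one_mul], by
    exact ⟨fun i => (f.1 i).2, fun i => (f.2 i).2, fun p => fA5 k⟩⟩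
  left_inv x := by
    apply Subtype.ext
    refine Prod.ext rfl (Prod.ext rfl ?_)
    funext p
    exact (fA2 k _ (x.2.1.1 p) (x.2.2.2.2 p)).symm
  right_inv f := rfl

lemma card_fixSet (h r : ℕ) (k : Fin 3) (hre : Even r) :
    Nat.card (FixSet h r k) = 4 ^ h := by
  rw [Nat.card_congr (fixEquiv h r k hre), Nat.card_eq_fintype_card, Fintype.card_prod,
    Fintype.card_fun, Fintype.card_fin]
  have h2 : Fintype.card {g : Perm (Fin 3) // g k = k} = 2 := by revert k; decide
  rw [h2, ← mul_pow]; norm_num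

lemma fix_unique {h r : ℕ} (x : TupleSpace 3 h r) (hx : IsHurwitzTuple x) (hr : 0 < r)
    {k k' : Fin 3} (h1 : FixAll x k) (h2 : FixAll x k') : k = k' := by
  have hswap := hx.1 ⟨0, hr⟩
  exact (by decide : ∀ t : Perm (Fin 3), t.IsSwap → ∀ a b, t a = a → t b = b → a = b)
    _ hswap _ _ (h1.2.2 ⟨0, hr⟩) (h2.2.2 ⟨0, hr⟩)

noncomputable def ntEquiv (h r : ℕ) (hr : 0 < r) :
    {x : TupleSpace 3 h r // IsHurwitzTuple x ∧ ∃ k, FixAll x k} ≃ Σ k : Fin 3, FixSet h r k where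
  toFun x := ⟨x.2.2.choose, x.1, x.2.1, x.2.2.choose_spec⟩
  invFun y := ⟨y.2.1, y.2.2.1, y.1, y.2.2.2⟩
  left_inv x := Subtype.ext rfl
  right_inv y := by
    rcases y with ⟨k, x, hx, hk⟩
    refine Sigma.subtype_ext ?_ rfl
    exact fix_unique x hx hr (Exists.choose_spec (⟨k, hk⟩ : ∃ k, FixAll x k)) hk

open Classical in
noncomputable def hurSplit (h r : ℕ) : {x : TupleSpace 3 h r // IsHurwitzTuple x} ≃
    {x : TupleSpace 3 h r // IsTransTuple x} ⊕
      {x : TupleSpace 3 h r // IsHurwitzTuple x ∧ ∃ k, FixAll x k} where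
  toFun x :=
    if hc : ∃ k, FixAll x.1 k then Sum.inr ⟨x.1, x.2, hc⟩
    else Sum.inl ⟨x.1, x.2, (transCond_iff_not_fix x.1).2 hc⟩
  invFun y := Sum.elim (fun y => ⟨y.1, y.2.1⟩) (fun y => ⟨y.1, y.2.1⟩) y
  left_inv x := by
    by_cases hc : ∃ k, FixAll x.1 k <;> simp [hc]
  right_inv y := by
    rcases y with ⟨x, hx, htr⟩ | ⟨x, hx, hfix⟩
    · have hc : ¬ ∃ k, FixAll x k := (transCond_iff_not_fix x).1 htr
      simp [hc]
    · simp [hfix]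

lemma Tval (h r : ℕ) (hr : 1 ≤ r) (hre : Even r) :
    Tcount 3 h r + 3 * 4 ^ h = 3 ^ (r - 1) * 36 ^ h := by
  have hB : Bcount 3 h r = Tcount 3 h r + 3 * 4 ^ h := by
    rw [Bcount, Nat.card_congr (hurSplit h r), Nat.card_sum]
    congr 1
    rw [Nat.card_congr (ntEquiv h r hr), nat_card_sigma]
    have : ∀ k : Fin 3, Nat.card (FixSet h r k) = 4 ^ h := fun k => card_fixSet h r k hre
    rw [Finset.sum_congr rfl (fun k _ => this k), Finset.sum_const, smul_eq_mul,
      Finset.card_univ, Fintype.card_fin]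
  rw [← hB, Bval h r hr hre]

def conjT {h r : ℕ} (g : Perm (Fin 3)) (x : TupleSpace 3 h r) : TupleSpace 3 h r :=
  (fun i => g * x.1 i * g⁻¹, fun i => g * x.2.1 i * g⁻¹, fun p => g * x.2.2 p * g⁻¹)

lemma conj_ofFn_prod (g : Perm (Fin 3)) : ∀ (n : ℕ) (f : Fin n → Perm (Fin 3)),
    (List.ofFn fun i => g * f i * g⁻¹).prod = g * (List.ofFn f).prod * g⁻¹ := by
  intro n
  induction n with
  | zero => intro f; simp
  | succ n ih =>
    intro f
    rw [List.ofFn_succ, List.ofFn_succ, List.prod_cons, List.prod_cons,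
      show (List.ofFn fun i : Fin n => g * f i.succ * g⁻¹).prod =
        g * (List.ofFn fun i : Fin n => f i.succ).prod * g⁻¹ from ih _]
    group

lemma conj_swap : ∀ g t : Perm (Fin 3), t.IsSwap → (g * t * g⁻¹).IsSwap := by decide

lemma conj_comm_elt (g a b : Perm (Fin 3)) :
    ⁅g * a * g⁻¹, g * b * g⁻¹⁆ = g * ⁅a, b⁆ * g⁻¹ := by
  simp only [commutatorElement_def]
  group

lemma isTrans_conj {h r : ℕ} (x : TupleSpace 3 h r) (hx : IsTransTuple x) (g : Perm (Fin 3)) :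
    IsTransTuple (conjT g x) := by
  obtain ⟨⟨hsw, hprod⟩, htr⟩ := hx
  refine ⟨⟨fun p => conj_swap g _ (hsw p), ?_⟩, ?_⟩
  · show ((List.ofFn fun i => ⁅g * x.1 i * g⁻¹, g * x.2.1 i * g⁻¹⁆).prod *
      (List.ofFn fun p => g * x.2.2 p * g⁻¹).prod = 1)
    have e1 : (fun i => ⁅g * x.1 i * g⁻¹, g * x.2.1 i * g⁻¹⁆) =
        fun i => g * ⁅x.1 i, x.2.1 i⁆ * g⁻¹ := by
      funext i; exact conj_comm_elt g _ _
    rw [e1, conj_ofFn_prod, conj_ofFn_prod]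
    have : (List.ofFn fun i => ⁅x.1 i, x.2.1 i⁆).prod * (List.ofFn x.2.2).prod = 1 := hprod
    calc g * (List.ofFn fun i => ⁅x.1 i, x.2.1 i⁆).prod * g⁻¹ *
          (g * (List.ofFn x.2.2).prod * g⁻¹)
        = g * ((List.ofFn fun i => ⁅x.1 i, x.2.1 i⁆).prod * (List.ofFn x.2.2).prod) * g⁻¹ := by
          group
      _ = 1 := by rw [this]; group
  · intro y z
    obtain ⟨p, hp, hpc⟩ := htr (g⁻¹ y) (g⁻¹ z)
    have hmap : Subgroup.closure (Set.range (conjT g x).1 ∪ Set.range (conjT g x).2.1 ∪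
        Set.range (conjT g x).2.2) =
        Subgroup.map (MulAut.conj g).toMonoidHom
          (Subgroup.closure (Set.range x.1 ∪ Set.range x.2.1 ∪ Set.range x.2.2)) := by
      rw [MonoidHom.map_closure]
      congr 1
      rw [Set.image_union, Set.image_union]
      congr 1 <;> [skip; (rw [← Set.range_comp]; rfl)]
      congr 1 <;> (rw [← Set.range_comp]; rfl)
    refine ⟨g * p * g⁻¹, ?_, ?_⟩
    · rw [hmap]
      exact ⟨p, hp, rfl⟩
    · show g (p (g⁻¹ y)) = z
      rw [hpc]
      simp

lemma conj_eq_self {h r : ℕ} (x : TupleSpace 3 h r) (hx : IsTransTuple x) (hr : 0 < r)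
    (g : Perm (Fin 3))
    (ha : ∀ i, g * x.1 i * g⁻¹ = x.1 i) (hb : ∀ i, g * x.2.1 i * g⁻¹ = x.2.1 i)
    (ht : ∀ p, g * x.2.2 p * g⁻¹ = x.2.2 p) : g = 1 := by
  have hcent : Subgroup.closure (Set.range x.1 ∪ Set.range x.2.1 ∪ Set.range x.2.2) ≤
      Subgroup.centralizer {g} := by
    rw [Subgroup.closure_le]
    have key : ∀ s : Perm (Fin 3), g * s * g⁻¹ = s → s ∈ Subgroup.centralizer {g} := by
      intro s hs
      rw [Subgroup.mem_centralizer_iff]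
      rintro y rfl
      calc y * s = (y * s * y⁻¹) * y := by group
        _ = s * y := by rw [hs]
    rintro s (⟨⟨i, rfl⟩ | ⟨i, rfl⟩⟩ | ⟨p, rfl⟩)
    · exact key _ (ha i)
    · exact key _ (hb i)
    · exact key _ (ht p)
  set t0 := x.2.2 ⟨0, hr⟩ with ht0
  have hsw : t0.IsSwap := hx.1.1 ⟨0, hr⟩
  obtain ⟨c, hc⟩ := (by decide : ∀ t : Perm (Fin 3), t.IsSwap → ∃ c, t c = c) t0 hsw
  have huniq := (by decide : ∀ t : Perm (Fin 3), t.IsSwap → ∀ a b, t a = a → t b = b → a = b)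
    t0 hsw
  have hgt : g * t0 = t0 * g := by
    have := ht ⟨0, hr⟩
    calc g * t0 = (g * t0 * g⁻¹) * g := by group
      _ = t0 * g := by rw [this]
  have hgc : g c = c := by
    have h1 : t0 (g c) = g c := by
      have := congrArg (fun σ : Perm (Fin 3) => σ c) hgt.symm
      simp only [Perm.mul_apply] at this
      rw [hc] at this
      exact this
    exact huniq _ _ h1 hc
  have hgk : ∀ k, g k = k := by
    intro k
    obtain ⟨p, hp, hpc⟩ := hx.2 c k
    have hcomm : g * p = p * g := by
      have := Subgroup.mem_centralizer_iff.1 (hcent hp) g rfl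
      exact this
    calc g k = g (p c) := by rw [hpc]
      _ = (g * p) c := rfl
      _ = (p * g) c := by rw [hcomm]
      _ = p (g c) := rfl
      _ = p c := by rw [hgc]
      _ = k := hpc
  exact Equiv.ext fun k => hgk k

def csetoid (h r : ℕ) : Setoid {x : TupleSpace 3 h r // IsTransTuple x} where
  r := ConjRel
  iseqv := by
    constructor
    · intro x
      exact ⟨1, fun i => by group, fun i => by group, fun p => by group⟩
    · rintro x y ⟨g, h1, h2, h3⟩
      refine ⟨g⁻¹, fun i => ?_, fun i => ?_, fun p => ?_⟩
      · rw [← h1 i]; group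
      · rw [← h2 i]; group
      · rw [← h3 p]; group
    · rintro x y z ⟨g, h1, h2, h3⟩ ⟨g', h1', h2', h3'⟩
      refine ⟨g' * g, fun i => ?_, fun i => ?_, fun p => ?_⟩
      · rw [← h1' i, ← h1 i]; group
      · rw [← h2' i, ← h2 i]; group
      · rw [← h3' p, ← h3 p]; group

noncomputable def orbitEquiv {h r : ℕ} (hr : 0 < r) (x : {x : TupleSpace 3 h r // IsTransTuple x}) :
    Perm (Fin 3) ≃ {y : {x : TupleSpace 3 h r // IsTransTuple x} // ConjRel x y} := by
  refine Equiv.ofBijective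
    (fun g => ⟨⟨conjT g x.1, isTrans_conj x.1 x.2 g⟩,
      ⟨g, fun i => rfl, fun i => rfl, fun p => rfl⟩⟩) ⟨?_, ?_⟩
  · intro g g' hgg
    have hEq : conjT g x.1 = conjT g' x.1 := congrArg (fun y => y.1.1) hgg
    have e1 : ∀ i, g * x.1.1 i * g⁻¹ = g' * x.1.1 i * g'⁻¹ :=
      fun i => congrFun (congrArg Prod.fst hEq) i
    have e2 : ∀ i, g * x.1.2.1 i * g⁻¹ = g' * x.1.2.1 i * g'⁻¹ :=
      fun i => congrFun (congrArg (fun y => y.2.1) hEq) i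
    have e3 : ∀ p, g * x.1.2.2 p * g⁻¹ = g' * x.1.2.2 p * g'⁻¹ :=
      fun p => congrFun (congrArg (fun y => y.2.2) hEq) p
    have key : ∀ (s : Perm (Fin 3)), g * s * g⁻¹ = g' * s * g'⁻¹ →
        (g'⁻¹ * g) * s * (g'⁻¹ * g)⁻¹ = s := by
      intro s hs
      calc (g'⁻¹ * g) * s * (g'⁻¹ * g)⁻¹ = g'⁻¹ * (g * s * g⁻¹) * g' := by group
        _ = g'⁻¹ * (g' * s * g'⁻¹) * g' := by rw [hs]
        _ = s := by group
    have h1 : g'⁻¹ * g = 1 :=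
      conj_eq_self x.1 x.2 hr (g'⁻¹ * g) (fun i => key _ (e1 i)) (fun i => key _ (e2 i))
        (fun p => key _ (e3 p))
    have := inv_mul_eq_one.1 h1
    exact this.symm
  · rintro ⟨y, g, h1, h2, h3⟩
    refine ⟨g, Subtype.ext (Subtype.ext ?_)⟩
    exact Prod.ext (funext h1) (Prod.ext (funext h2) (funext h3))

lemma card_orbit {h r : ℕ} (hr : 0 < r) (x : {x : TupleSpace 3 h r // IsTransTuple x}) :
    Nat.card {y : {x : TupleSpace 3 h r // IsTransTuple x} // ConjRel x y} = 6 := by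
  rw [← Nat.card_congr (orbitEquiv hr x), Nat.card_eq_fintype_card, Fintype.card_perm]
  rfl

noncomputable def classEquiv (h r : ℕ) :
    {s : Set {x : TupleSpace 3 h r // IsTransTuple x} // ∃ x, s = {y | ConjRel x y}} ≃
      Quotient (csetoid h r) where
  toFun s := Quotient.mk (csetoid h r) s.2.choose
  invFun q := Quotient.lift
    (fun x => (⟨{y | ConjRel x y}, x, rfl⟩ :
      {s : Set {x : TupleSpace 3 h r // IsTransTuple x} // ∃ x, s = {y | ConjRel x y}}))
    (fun a b hab => Subtype.ext (Set.ext fun y =>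
      ⟨fun hy => (csetoid h r).trans ((csetoid h r).symm hab) hy,
       fun hy => (csetoid h r).trans hab hy⟩)) q
  left_inv s := by
    rcases s with ⟨s, hs⟩
    apply Subtype.ext
    exact hs.choose_spec.symm
  right_inv q := by
    induction q using Quotient.ind with
    | _ x =>
      show Quotient.mk (csetoid h r)
        (⟨{y | ConjRel x y}, x, rfl⟩ :
          {s : Set {x : TupleSpace 3 h r // IsTransTuple x} // ∃ x, s = {y | ConjRel x y}}
          ).2.choose = _
      apply Quotient.sound
      have hspec := (⟨x, rfl⟩ : ∃ x', ({y | ConjRel x y} : Set _) = {y | ConjRel x' y}).choose_spec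
      have hx : x ∈ {y | ConjRel x y} := (csetoid h r).refl x
      rw [hspec] at hx
      exact hx

lemma orbit_count (h r : ℕ) (hr : 0 < r) : Tcount 3 h r = 6 * NOrb 3 h r := by
  classical
  have hfin : Finite (Quotient (csetoid h r)) := Quotient.finite _
  have := Fintype.ofFinite (Quotient (csetoid h r))
  have e := Equiv.sigmaFiberEquiv (Quotient.mk (csetoid h r))
  rw [Tcount, ← Nat.card_congr e, nat_card_sigma]
  have hfib : ∀ q : Quotient (csetoid h r),
      Nat.card {x // Quotient.mk (csetoid h r) x = q} = 6 := by
    intro q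
    induction q using Quotient.ind with
    | _ x =>
      have e2 : {y // Quotient.mk (csetoid h r) y = Quotient.mk (csetoid h r) x} ≃
          {y // ConjRel x y} := by
        apply Equiv.subtypeEquivRight
        intro y
        constructor
        · intro hy
          exact (csetoid h r).symm (Quotient.exact hy)
        · intro hy
          exact Quotient.sound ((csetoid h r).symm hy)
      rw [Nat.card_congr e2, card_orbit hr]
  rw [Finset.sum_congr rfl (fun q _ => hfib q), Finset.sum_const, smul_eq_mul,
    Finset.card_univ, ← Nat.card_eq_fintype_card, NOrb, Nat.card_congr (classEquiv h r)]
  ring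

theorem degree_three_simple_hurwitz (h r : ℕ) (hr : 2 ≤ r) (hreven : Even r) :
    (NOrb 3 h r : ℚ) =
      (2 : ℚ) ^ (2 * (h : ℤ) - 1) * ((3 : ℚ) ^ (2 * (h : ℤ) - 2 + r) - 1) := by
  obtain ⟨m, hm⟩ : ∃ m, r = m + 2 := ⟨r - 2, by omega⟩
  subst hm
  have h1 : Tcount 3 h (m+2) + 3 * 4 ^ h = 3 ^ (m + 2 - 1) * 36 ^ h :=
    Tval h (m+2) (by omega) hreven
  have h2 : Tcount 3 h (m+2) = 6 * NOrb 3 h (m+2) := orbit_count h (m+2) (by omega)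
  have hN : 6 * NOrb 3 h (m+2) + 3 * 4 ^ h = 3 ^ (m + 1) * 36 ^ h := by
    rw [← h2]
    simpa using h1
  have hQ : 6 * (NOrb 3 h (m+2) : ℚ) + 3 * 4 ^ h = 3 ^ (m + 1) * 36 ^ h := by
    exact_mod_cast congrArg (Nat.cast : ℕ → ℚ) hN
  have hexp1 : 2 * (h : ℤ) - 1 = (2 * h : ℕ) + (-1 : ℤ) := by push_cast; ring
  have hexp2 : 2 * (h : ℤ) - 2 + ((m + 2 : ℕ) : ℤ) = ((2 * h + m : ℕ) : ℤ) := by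
    push_cast; ring
  rw [hexp1, hexp2, zpow_add₀ (by norm_num : (2:ℚ) ≠ 0), zpow_natCast, zpow_natCast,
    zpow_neg_one]
  have e36 : (36:ℚ) ^ h = 4 ^ h * 3 ^ (2 * h) := by
    rw [show (36:ℚ) = 4 * 3 ^ 2 by norm_num, mul_pow, ← pow_mul]
  have e3 : (3:ℚ) ^ (2 * h + m) = 3 ^ (2 * h) * 3 ^ m := pow_add 3 _ _
  have e2 : (2:ℚ) ^ (2 * h) = 4 ^ h := by
    rw [pow_mul]; norm_num
  have e31 : (3:ℚ) ^ (m + 1) = 3 ^ m * 3 := pow_succ 3 m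
  rw [e3, e2, e31] at *
  rw [e36] at hQ
  linear_combination hQ / 6
end

section
/- For every h ≥ 0 and every m ≥ 0, the count B_{3,h,m} satisfies, as an identity of rational numbers: B_{3,h,m} = 2^{2h} · 3^{2h−1+m} if m is even and m > 0; B_{3,h,m} = 0 if m is odd; and B_{3,h,0} = 2 · 3^{2h−1} · (2^{2h−1} + 1), where powers with possibly negative exponents are interpreted in ℚ. -/
open Equiv
open scoped commutatorElement

/-! ### Auxiliary development -/

instance permFin3SwapDec : DecidablePred (Perm.IsSwap (α := Fin 3)) := fun f =>
  decidable_of_iff (∃ x y, x ≠ y ∧ f = swap x y) Iff.rfl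

/-- The Hurwitz condition with general target `g`. -/
def HCond {h m : ℕ} (g : Perm (Fin 3)) (x : TupleSpace 3 h m) : Prop :=
  (∀ p, (x.2.2 p).IsSwap) ∧
    (List.ofFn fun i => ⁅x.1 i, x.2.1 i⁆).prod * (List.ofFn x.2.2).prod = g

instance HCond.dec {h m : ℕ} (g : Perm (Fin 3)) :
    DecidablePred (HCond (h := h) (m := m) g) := fun x => by
  unfold HCond; infer_instance

/-- The generalized count. -/
noncomputable def Cnt (h m : ℕ) (g : Perm (Fin 3)) : ℕ :=
  Nat.card {x : TupleSpace 3 h m // HCond g x}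

lemma Cnt_eq (h m : ℕ) (g : Perm (Fin 3)) :
    Cnt h m g = Fintype.card {x : TupleSpace 3 h m // HCond g x} :=
  Nat.card_eq_fintype_card

lemma Bcount_eq (h m : ℕ) : Bcount 3 h m = Cnt h m 1 := rfl

lemma comm_prod_succ {h : ℕ} (a b : Fin (h + 1) → Perm (Fin 3)) :
    (List.ofFn fun i => ⁅a i, b i⁆).prod
      = ⁅a 0, b 0⁆ * (List.ofFn fun i : Fin h => ⁅Fin.tail a i, Fin.tail b i⁆).prod := by
  rw [List.ofFn_succ, List.prod_cons]; rfl

lemma swap_prod_succ {m : ℕ} (t : Fin (m + 1) → Perm (Fin 3)) :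
    (List.ofFn t).prod = (List.ofFn (Fin.init t)).prod * t (Fin.last m) := by
  rw [List.ofFn_succ', List.prod_concat]; rfl

/-- Peeling off the first commutator. -/
def fiberEquivLeft (h m : ℕ) (g : Perm (Fin 3)) (ab : Perm (Fin 3) × Perm (Fin 3)) :
    {y : {x : TupleSpace 3 (h + 1) m // HCond g x} // (y.1.1 0, y.1.2.1 0) = ab} ≃
      {x : TupleSpace 3 h m // HCond (⁅ab.1, ab.2⁆⁻¹ * g) x} where
  toFun y := ⟨(Fin.tail y.1.1.1, Fin.tail y.1.1.2.1, y.1.1.2.2), by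
    obtain ⟨⟨⟨a, b, t⟩, hs, hp⟩, hab⟩ := y
    subst hab
    refine ⟨hs, ?_⟩
    rw [comm_prod_succ, mul_assoc] at hp
    rw [eq_inv_mul_iff_mul_eq]
    exact hp⟩
  invFun x := ⟨⟨(Fin.cons ab.1 x.1.1, Fin.cons ab.2 x.1.2.1, x.1.2.2), by
    obtain ⟨⟨a, b, t⟩, hs, hp⟩ := x
    refine ⟨hs, ?_⟩
    rw [comm_prod_succ]
    simp only [Fin.cons_zero, Fin.tail_cons]
    rw [mul_assoc, hp, mul_inv_cancel_left]⟩, by simp⟩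
  left_inv := by
    rintro ⟨⟨⟨a, b, t⟩, hx⟩, hab⟩
    subst hab
    apply Subtype.ext
    apply Subtype.ext
    simp [Fin.cons_self_tail]
  right_inv := by
    rintro ⟨⟨a, b, t⟩, hx⟩
    apply Subtype.ext
    simp [Fin.tail_cons]

lemma Cnt_succ_left (h m : ℕ) (g : Perm (Fin 3)) :
    Cnt (h + 1) m g
      = ∑ ab : Perm (Fin 3) × Perm (Fin 3), Cnt h m (⁅ab.1, ab.2⁆⁻¹ * g) := by
  rw [Cnt_eq]
  rw [← Fintype.card_congr
    (sigmaFiberEquiv (fun y : {x : TupleSpace 3 (h + 1) m // HCond g x} =>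
      (y.1.1 0, y.1.2.1 0)))]
  rw [Fintype.card_sigma]
  exact Finset.sum_congr rfl fun ab _ => by
    rw [Fintype.card_congr (fiberEquivLeft h m g ab), ← Cnt_eq]

/-- Peeling off the last transposition. -/
def fiberEquivRight (h m : ℕ) (g : Perm (Fin 3)) (t0 : Perm (Fin 3)) (ht : t0.IsSwap) :
    {y : {x : TupleSpace 3 h (m + 1) // HCond g x} // y.1.2.2 (Fin.last m) = t0} ≃
      {x : TupleSpace 3 h m // HCond (g * t0⁻¹) x} where
  toFun y := ⟨(y.1.1.1, y.1.1.2.1, Fin.init y.1.1.2.2), by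
    obtain ⟨⟨⟨a, b, t⟩, hs, hp⟩, hlast⟩ := y
    subst hlast
    refine ⟨fun i => hs i.castSucc, ?_⟩
    rw [swap_prod_succ, ← mul_assoc] at hp
    rw [eq_mul_inv_iff_mul_eq]
    exact hp⟩
  invFun x := ⟨⟨(x.1.1, x.1.2.1, Fin.snoc x.1.2.2 t0), by
    obtain ⟨⟨a, b, t⟩, hs, hp⟩ := x
    constructor
    · intro p
      refine Fin.lastCases ?_ ?_ p
      · simpa using ht
      · intro i; simpa using hs i
    · rw [swap_prod_succ]
      simp only [Fin.snoc_last, Fin.init_snoc]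
      rw [← mul_assoc, hp, inv_mul_cancel_right]⟩, by simp⟩
  left_inv := by
    rintro ⟨⟨⟨a, b, t⟩, hx⟩, hlast⟩
    subst hlast
    apply Subtype.ext
    apply Subtype.ext
    simp [Fin.snoc_init_self]
  right_inv := by
    rintro ⟨⟨a, b, t⟩, hx⟩
    apply Subtype.ext
    simp [Fin.init_snoc]

lemma Cnt_succ_right (h m : ℕ) (g : Perm (Fin 3)) :
    Cnt h (m + 1) g
      = ∑ t0 : Perm (Fin 3), if t0.IsSwap then Cnt h m (g * t0⁻¹) else 0 := by
  rw [Cnt_eq]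
  rw [← Fintype.card_congr
    (sigmaFiberEquiv (fun y : {x : TupleSpace 3 h (m + 1) // HCond g x} =>
      y.1.2.2 (Fin.last m)))]
  rw [Fintype.card_sigma]
  refine Finset.sum_congr rfl fun t0 _ => ?_
  by_cases ht : t0.IsSwap
  · rw [if_pos ht, Fintype.card_congr (fiberEquivRight h m g t0 ht), ← Cnt_eq]
  · rw [if_neg ht]
    have : IsEmpty {y : {x : TupleSpace 3 h (m + 1) // HCond g x} //
        y.1.2.2 (Fin.last m) = t0} :=
      ⟨fun y => ht (y.2 ▸ y.1.2.1 (Fin.last m))⟩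
    exact Fintype.card_eq_zero

/-! ### Small concrete counts in S₃, by `decide` -/

set_option maxRecDepth 10000

lemma sumC1 : ∀ g : Perm (Fin 3),
    (∑ ab : Perm (Fin 3) × Perm (Fin 3),
        (if ⁅ab.1, ab.2⁆⁻¹ * g = 1 then (1 : ℕ) else 0))
      = if Perm.sign g = 1 then (if g = 1 then 18 else 9) else 0 := by decide

lemma sumC2 : ∀ g : Perm (Fin 3),
    (∑ ab : Perm (Fin 3) × Perm (Fin 3),
        (if ¬(⁅ab.1, ab.2⁆⁻¹ * g = 1) ∧ Perm.sign (⁅ab.1, ab.2⁆⁻¹ * g) = 1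
          then (1 : ℕ) else 0))
      = if Perm.sign g = 1 then (if g = 1 then 18 else 27) else 0 := by decide

lemma sumS1 : ∀ g : Perm (Fin 3),
    (∑ t : Perm (Fin 3), (if t.IsSwap ∧ g * t⁻¹ = 1 then (1 : ℕ) else 0))
      = if Perm.sign g = -1 then 1 else 0 := by decide

lemma sumS2 : ∀ g : Perm (Fin 3),
    (∑ t : Perm (Fin 3),
        (if t.IsSwap ∧ ¬(g * t⁻¹ = 1) ∧ Perm.sign (g * t⁻¹) = 1 then (1 : ℕ) else 0))
      = if Perm.sign g = -1 then 2 else 0 := by decide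

lemma sumS3 : (∑ t : Perm (Fin 3), (if t.IsSwap then (1 : ℕ) else 0)) = 3 := by decide

/-! ### The recursively defined values -/

lemma split_if1 (u v : ℕ) (c : Perm (Fin 3)) :
    (if c = 1 then u else if Perm.sign c = 1 then v else 0)
      = u * (if c = 1 then 1 else 0)
        + v * (if ¬(c = 1) ∧ Perm.sign c = 1 then 1 else 0) := by
  by_cases h1 : c = 1
  · simp [h1]
  · by_cases h2 : Perm.sign c = 1 <;> simp [h1, h2]

lemma split_if2 (u v : ℕ) (P : Prop) [Decidable P] (c : Perm (Fin 3)) :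
    (if P then (if c = 1 then u else if Perm.sign c = 1 then v else 0) else 0)
      = u * (if P ∧ c = 1 then 1 else 0)
        + v * (if P ∧ ¬(c = 1) ∧ Perm.sign c = 1 then 1 else 0) := by
  by_cases hP : P
  · simp only [hP, true_and, if_true]
    exact split_if1 u v c
  · simp [hP]

def UV : ℕ → ℕ × ℕ
  | 0 => (1, 0)
  | h + 1 => (18 * (UV h).1 + 18 * (UV h).2, 9 * (UV h).1 + 27 * (UV h).2)

lemma UV_sum (h : ℕ) : (UV h).1 + 2 * (UV h).2 = 36 ^ h := by
  induction h with
  | zero => simp [UV]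
  | succ h ih =>
    show 18 * (UV h).1 + 18 * (UV h).2 + 2 * (9 * (UV h).1 + 27 * (UV h).2) = 36 ^ (h + 1)
    rw [pow_succ, ← ih]; ring

lemma key0 (h : ℕ) : ∀ g : Perm (Fin 3),
    Cnt h 0 g = if g = 1 then (UV h).1 else if Perm.sign g = 1 then (UV h).2 else 0 := by
  induction h with
  | zero =>
    intro g
    have : Cnt 0 0 g = if g = 1 then 1 else 0 := by
      rw [Cnt_eq]
      by_cases hg : g = 1
      · subst hg
        rw [if_pos rfl]
        rw [Fintype.card_eq_one_iff]
        refine ⟨⟨(Fin.elim0, Fin.elim0, Fin.elim0), ⟨fun p => p.elim0, by simp⟩⟩, ?_⟩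
        rintro ⟨⟨a, b, t⟩, -⟩
        apply Subtype.ext
        refine Prod.ext (funext fun i => i.elim0) (Prod.ext (funext fun i => i.elim0)
          (funext fun i => i.elim0))
      · rw [if_neg hg]
        refine Fintype.card_eq_zero_iff.mpr ⟨fun x => hg ?_⟩
        have := x.2.2
        simpa using this.symm
    rw [this]
    by_cases hg : g = 1
    · simp [hg, UV]
    · by_cases hs : Perm.sign g = 1 <;> simp [hg, hs, UV]
  | succ h ih =>
    intro g
    rw [Cnt_succ_left]
    have step : ∀ ab : Perm (Fin 3) × Perm (Fin 3),
        Cnt h 0 (⁅ab.1, ab.2⁆⁻¹ * g)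
          = (UV h).1 * (if ⁅ab.1, ab.2⁆⁻¹ * g = 1 then 1 else 0)
            + (UV h).2 * (if ¬(⁅ab.1, ab.2⁆⁻¹ * g = 1)
                ∧ Perm.sign (⁅ab.1, ab.2⁆⁻¹ * g) = 1 then 1 else 0) := by
      intro ab
      rw [ih]
      exact split_if1 _ _ _
    rw [Finset.sum_congr rfl fun ab _ => step ab, Finset.sum_add_distrib,
      ← Finset.mul_sum, ← Finset.mul_sum, sumC1 g, sumC2 g]
    by_cases hg : g = 1
    · have hs : Perm.sign g = 1 := by rw [hg, map_one]
      simp only [hg, hs, if_pos rfl, if_true]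
      show (UV h).1 * 18 + (UV h).2 * 18 = (UV (h + 1)).1
      show (UV h).1 * 18 + (UV h).2 * 18 = 18 * (UV h).1 + 18 * (UV h).2
      ring
    · by_cases hs : Perm.sign g = 1
      · simp only [hg, hs, if_true, if_false, if_neg hg]
        show (UV h).1 * 9 + (UV h).2 * 27 = (UV (h + 1)).2
        show (UV h).1 * 9 + (UV h).2 * 27 = 9 * (UV h).1 + 27 * (UV h).2
        ring
      · simp [hg, hs]

lemma key1 (h : ℕ) : ∀ (m : ℕ) (g : Perm (Fin 3)),
    Cnt h (m + 1) g
      = if Perm.sign g = (-1) ^ (m + 1) then 3 ^ m * 36 ^ h else 0 := by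
  intro m
  induction m with
  | zero =>
    intro g
    rw [Cnt_succ_right]
    have step : ∀ t : Perm (Fin 3),
        (if t.IsSwap then Cnt h 0 (g * t⁻¹) else 0)
          = (UV h).1 * (if t.IsSwap ∧ g * t⁻¹ = 1 then 1 else 0)
            + (UV h).2 * (if t.IsSwap ∧ ¬(g * t⁻¹ = 1)
                ∧ Perm.sign (g * t⁻¹) = 1 then 1 else 0) := by
      intro t
      rw [key0 h (g * t⁻¹)]
      exact split_if2 _ _ _ _
    rw [Finset.sum_congr rfl fun t _ => step t, Finset.sum_add_distrib,
      ← Finset.mul_sum, ← Finset.mul_sum, sumS1 g, sumS2 g]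
    have hpow : ((-1 : ℤˣ)) ^ (0 + 1) = -1 := by decide
    rw [hpow]
    by_cases hs : Perm.sign g = -1
    · rw [if_pos hs, if_pos hs, if_pos hs]
      show (UV h).1 * 1 + (UV h).2 * 2 = 3 ^ 0 * 36 ^ h
      rw [pow_zero, one_mul, ← UV_sum h]; ring
    · simp [hs]
  | succ m ih =>
    intro g
    rw [Cnt_succ_right]
    have hm1 : ((-1 : ℤˣ)) * -1 = 1 := by decide
    have step : ∀ t : Perm (Fin 3),
        (if t.IsSwap then Cnt h (m + 1) (g * t⁻¹) else 0)
          = (if Perm.sign g = (-1) ^ (m + 1 + 1) then 3 ^ m * 36 ^ h else 0)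
            * (if t.IsSwap then 1 else 0) := by
      intro t
      by_cases hsw : t.IsSwap
      · rw [if_pos hsw, if_pos hsw, mul_one, ih]
        have hiff : Perm.sign (g * t⁻¹) = (-1) ^ (m + 1)
            ↔ Perm.sign g = (-1) ^ (m + 1 + 1) := by
          have hinv : ((-1 : ℤˣ))⁻¹ = -1 := by decide
          rw [map_mul, map_inv, hsw.sign_eq, hinv, pow_succ ((-1 : ℤˣ)) (m + 1)]
          constructor
          · intro H
            rw [← H, mul_assoc, hm1, mul_one]
          · intro H
            rw [H, mul_assoc, hm1, mul_one]
        by_cases hc : Perm.sign (g * t⁻¹) = (-1) ^ (m + 1)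
        · rw [if_pos hc, if_pos (hiff.mp hc)]
        · rw [if_neg hc, if_neg (fun hx => hc (hiff.mpr hx))]
      · simp [hsw]
    rw [Finset.sum_congr rfl fun t _ => step t, ← Finset.mul_sum, sumS3]
    by_cases hs : Perm.sign g = (-1) ^ (m + 1 + 1)
    · rw [if_pos hs, if_pos hs, pow_succ]
      ring
    · simp [hs]

lemma UV_q (h : ℕ) : ((UV h).1 : ℚ) = (36 ^ h + 2 * 9 ^ h) / 3
    ∧ ((UV h).2 : ℚ) = (36 ^ h - 9 ^ h) / 3 := by
  induction h with
  | zero => norm_num [UV]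
  | succ h ih =>
    obtain ⟨h1, h2⟩ := ih
    constructor
    · show ((18 * (UV h).1 + 18 * (UV h).2 : ℕ) : ℚ) = _
      push_cast
      rw [h1, h2, pow_succ, pow_succ]
      ring
    · show ((9 * (UV h).1 + 27 * (UV h).2 : ℕ) : ℚ) = _
      push_cast
      rw [h1, h2, pow_succ, pow_succ]
      ring

theorem degree_three_reducible_count (h m : ℕ) :
    (Even m → 0 < m → (Bcount 3 h m : ℚ) = (2 : ℚ) ^ (2 * h) * (3 : ℚ) ^ (2 * (h : ℤ) - 1 + m)) ∧
    (Odd m → (Bcount 3 h m : ℚ) = 0) ∧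
    (m = 0 → (Bcount 3 h m : ℚ) =
      2 * (3 : ℚ) ^ (2 * (h : ℤ) - 1) * ((2 : ℚ) ^ (2 * (h : ℤ) - 1) + 1)) := by
  refine ⟨?_, ?_, ?_⟩
  · intro hm hpos
    obtain ⟨k, rfl⟩ : ∃ k, m = k + 1 := ⟨m - 1, (Nat.succ_pred_eq_of_pos hpos).symm⟩
    have hkey := key1 h k 1
    rw [map_one, if_pos (by rw [hm.neg_one_pow])] at hkey
    rw [Bcount_eq, hkey]
    have hexp : (2 * (h : ℤ) - 1 + (k + 1 : ℕ)) = ((2 * h + k : ℕ) : ℤ) := by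
      push_cast; ring
    rw [hexp, zpow_natCast]
    push_cast
    have h36 : (36 : ℚ) ^ h = 2 ^ (2 * h) * 3 ^ (2 * h) := by
      rw [show (36 : ℚ) = 2 ^ 2 * 3 ^ 2 by norm_num, mul_pow, ← pow_mul, ← pow_mul]
    rw [h36, pow_add]
    ring
  · intro hm
    obtain ⟨k, rfl⟩ := hm
    have hkey := key1 h (2 * k) 1
    rw [map_one, if_neg (by rw [(odd_two_mul_add_one k).neg_one_pow]; decide)] at hkey
    rw [Bcount_eq, hkey]
    simp
  · rintro rfl
    rw [Bcount_eq, key0 h 1, if_pos rfl]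
    rw [(UV_q h).1]
    have e3 : (3 : ℚ) ^ (2 * (h : ℤ) - 1) = 9 ^ h / 3 := by
      rw [zpow_sub₀ (by norm_num : (3 : ℚ) ≠ 0), zpow_one]
      congr 1
      rw [show (2 * (h : ℤ)) = ((2 * h : ℕ) : ℤ) by push_cast; ring, zpow_natCast, pow_mul]
      norm_num
    have e2 : (2 : ℚ) ^ (2 * (h : ℤ) - 1) = 4 ^ h / 2 := by
      rw [zpow_sub₀ (by norm_num : (2 : ℚ) ≠ 0), zpow_one]
      congr 1
      rw [show (2 * (h : ℤ)) = ((2 * h : ℕ) : ℤ) by push_cast; ring, zpow_natCast, pow_mul]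
      norm_num
    rw [e3, e2]
    have h36 : (36 : ℚ) ^ h = 4 ^ h * 9 ^ h := by
      rw [← mul_pow]; norm_num
    rw [h36]
    ring
end

section
/- For every h ≥ 0 and every m ≥ 0, the count B_{4,h,m} satisfies, as an identity of rational numbers: B_{4,h,m} = 3 · 2^{m+6h−2} · (3^{2h−2+m} + 1) if m is even and m > 0; B_{4,h,m} = 0 if m is odd; and B_{4,h,0} = 3 · 2^{4h−1} · (2^{2h−1}·3^{2h−2} + 2^{2h−1} + 3^{2h−2}), where powers with possibly negative exponents are interpreted in ℚ. -/
open Equiv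
open scoped commutatorElement

instance : DecidablePred (Perm.IsSwap (α := Fin 4)) := fun f =>
  decidable_of_iff (∃ x y, x ≠ y ∧ f = Equiv.swap x y) Iff.rfl

def Cnd (h m : ℕ) (g : Perm (Fin 4)) (x : TupleSpace 4 h m) : Prop :=
  (∀ p, (x.2.2 p).IsSwap) ∧
    (List.ofFn fun i => ⁅x.1 i, x.2.1 i⁆).prod * (List.ofFn x.2.2).prod = g

instance (h m : ℕ) (g : Perm (Fin 4)) : DecidablePred (Cnd h m g) := fun x =>
  inferInstanceAs (Decidable ((∀ p, (x.2.2 p).IsSwap) ∧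
    (List.ofFn fun i => ⁅x.1 i, x.2.1 i⁆).prod * (List.ofFn x.2.2).prod = g))

noncomputable def Ncnt (h m : ℕ) (g : Perm (Fin 4)) : ℕ :=
  Nat.card {x : TupleSpace 4 h m // Cnd h m g x}

abbrev Swaps : Type := {τ : Perm (Fin 4) // τ.IsSwap}

lemma swap_sq (τ : Perm (Fin 4)) (hτ : τ.IsSwap) : τ * τ = 1 := by
  obtain ⟨a, b, -, rfl⟩ := hτ; exact Equiv.swap_mul_self a b

lemma prod_ofFn_snoc (f : Fin m → Perm (Fin 4)) (τ : Perm (Fin 4)) :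
    (List.ofFn (Fin.snoc f τ : Fin (m+1) → Perm (Fin 4))).prod = (List.ofFn f).prod * τ := by
  rw [List.ofFn_succ', List.prod_concat]
  simp [Fin.snoc_castSucc, Fin.snoc_last]

def emEquiv (h m : ℕ) (g : Perm (Fin 4)) :
    {x : TupleSpace 4 h (m+1) // Cnd h (m+1) g x} ≃
      Σ τ : Swaps, {x : TupleSpace 4 h m // Cnd h m (g * τ.1) x} where
  toFun x :=
    ⟨⟨x.1.2.2 (Fin.last m), x.2.1 _⟩,
     ⟨(x.1.1, x.1.2.1, Fin.init x.1.2.2),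
      ⟨fun p => by simpa [Fin.init] using x.2.1 p.castSucc, by
        have hp := x.2.2
        have hcon : (List.ofFn x.1.2.2) =
            (List.ofFn (Fin.init x.1.2.2)).concat (x.1.2.2 (Fin.last m)) := by
          rw [List.ofFn_succ']; rfl
        rw [hcon, List.prod_concat, ← mul_assoc] at hp
        have hs := swap_sq _ (x.2.1 (Fin.last m))
        calc (List.ofFn fun i => ⁅x.1.1 i, x.1.2.1 i⁆).prod * (List.ofFn (Fin.init x.1.2.2)).prod
            = ((List.ofFn fun i => ⁅x.1.1 i, x.1.2.1 i⁆).prod * (List.ofFn (Fin.init x.1.2.2)).prod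
                * x.1.2.2 (Fin.last m)) * x.1.2.2 (Fin.last m) := by
              rw [mul_assoc, mul_assoc, hs, mul_one]
          _ = g * x.1.2.2 (Fin.last m) := by rw [hp]⟩⟩⟩
  invFun y :=
    ⟨(y.2.1.1, y.2.1.2.1, Fin.snoc y.2.1.2.2 y.1.1),
     ⟨fun p => by
        refine Fin.lastCases ?_ ?_ p
        · simpa [Fin.snoc_last] using y.1.2
        · intro i; simpa [Fin.snoc_castSucc] using y.2.2.1 i, by
        have hp := y.2.2.2
        show _ * (List.ofFn (Fin.snoc y.2.1.2.2 y.1.1 : Fin (m+1) → Perm (Fin 4))).prod = g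
        rw [prod_ofFn_snoc, ← mul_assoc, hp, mul_assoc, swap_sq _ y.1.2, mul_one]⟩⟩
  left_inv x := by
    apply Subtype.ext
    refine Prod.ext rfl (Prod.ext rfl ?_)
    exact Fin.snoc_init_self _
  right_inv y := by
    obtain ⟨⟨τ, hτ⟩, ⟨z, hz⟩⟩ := y
    dsimp only
    have hlast : (Fin.snoc z.2.2 τ : Fin (m+1) → Perm (Fin 4)) (Fin.last m) = τ :=
      Fin.snoc_last _ _
    refine Sigma.ext (Subtype.ext hlast) ?_
    refine (Subtype.heq_iff_coe_eq ?_).2 ?_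
    · intro x; exact iff_of_eq (congrArg (fun t => Cnd h m (g * t) x) hlast)
    · refine Prod.ext rfl (Prod.ext rfl ?_)
      simp [Fin.init_snoc]

def ehEquiv (h m : ℕ) (g : Perm (Fin 4)) :
    {x : TupleSpace 4 (h+1) m // Cnd (h+1) m g x} ≃
      Σ p : Perm (Fin 4) × Perm (Fin 4), {x : TupleSpace 4 h m // Cnd h m (⁅p.1, p.2⁆⁻¹ * g) x} where
  toFun x :=
    ⟨(x.1.1 0, x.1.2.1 0),
     ⟨(Fin.tail x.1.1, Fin.tail x.1.2.1, x.1.2.2),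
      ⟨x.2.1, by
        have hp := x.2.2
        have hcon : (List.ofFn fun i => ⁅x.1.1 i, x.1.2.1 i⁆) =
            ⁅x.1.1 0, x.1.2.1 0⁆ :: List.ofFn fun i => ⁅Fin.tail x.1.1 i, Fin.tail x.1.2.1 i⁆ := by
          rw [List.ofFn_succ]; rfl
        rw [hcon, List.prod_cons, mul_assoc] at hp
        dsimp only
        rw [eq_inv_mul_iff_mul_eq]
        exact hp⟩⟩⟩
  invFun y :=
    ⟨(Fin.cons y.1.1 y.2.1.1, Fin.cons y.1.2 y.2.1.2.1, y.2.1.2.2),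
     ⟨y.2.2.1, by
        have hp := y.2.2.2
        have hcon : (List.ofFn fun i => ⁅(Fin.cons y.1.1 y.2.1.1 : Fin (h+1) → Perm (Fin 4)) i,
              (Fin.cons y.1.2 y.2.1.2.1 : Fin (h+1) → Perm (Fin 4)) i⁆) =
            ⁅y.1.1, y.1.2⁆ :: List.ofFn fun i => ⁅y.2.1.1 i, y.2.1.2.1 i⁆ := by
          rw [List.ofFn_succ]; rfl
        show (List.ofFn fun i => ⁅(Fin.cons y.1.1 y.2.1.1 : Fin (h+1) → Perm (Fin 4)) i,
              (Fin.cons y.1.2 y.2.1.2.1 : Fin (h+1) → Perm (Fin 4)) i⁆).prod * _ = g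
        rw [hcon, List.prod_cons, mul_assoc, hp, ← mul_assoc, mul_inv_cancel, one_mul]⟩⟩
  left_inv x := by
    apply Subtype.ext
    refine Prod.ext ?_ (Prod.ext ?_ rfl)
    · exact Fin.cons_self_tail _
    · exact Fin.cons_self_tail _
  right_inv y := by
    obtain ⟨⟨a, b⟩, ⟨z, hz⟩⟩ := y
    dsimp only
    refine Sigma.ext ?_ ?_
    · show ((Fin.cons a z.1 : Fin (h+1) → Perm (Fin 4)) 0, (Fin.cons b z.2.1 : Fin (h+1) → Perm (Fin 4)) 0) = (a, b)
      simp
    · refine (Subtype.heq_iff_coe_eq ?_).2 ?_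
      · intro x
        exact iff_of_eq (congrArg (fun t : Perm (Fin 4) × Perm (Fin 4) => Cnd h m (⁅t.1, t.2⁆⁻¹ * g) x)
          (by simp : ((Fin.cons a z.1 : Fin (h+1) → Perm (Fin 4)) 0, (Fin.cons b z.2.1 : Fin (h+1) → Perm (Fin 4)) 0) = (a, b)))
      · refine Prod.ext ?_ (Prod.ext ?_ rfl)
        · simp [Fin.tail_cons]
        · simp [Fin.tail_cons]

lemma ncnt_succ_m (h m : ℕ) (g : Perm (Fin 4)) :
    Ncnt h (m+1) g = ∑ τ : Swaps, Ncnt h m (g * τ.1) := by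
  rw [Ncnt, Nat.card_congr (emEquiv h m g), Nat.card_eq_fintype_card, Fintype.card_sigma]
  exact Finset.sum_congr rfl fun τ _ => (Nat.card_eq_fintype_card).symm

lemma ncnt_succ_h (h m : ℕ) (g : Perm (Fin 4)) :
    Ncnt (h+1) m g = ∑ p : Perm (Fin 4) × Perm (Fin 4), Ncnt h m (⁅p.1, p.2⁆⁻¹ * g) := by
  rw [Ncnt, Nat.card_congr (ehEquiv h m g), Nat.card_eq_fintype_card, Fintype.card_sigma]
  exact Finset.sum_congr rfl fun p _ => (Nat.card_eq_fintype_card).symm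

lemma ncnt_zero (g : Perm (Fin 4)) : Ncnt 0 0 g = if g = 1 then 1 else 0 := by
  have hiff : ∀ x : TupleSpace 4 0 0, Cnd 0 0 g x ↔ g = 1 := by
    intro x
    constructor
    · intro hx
      have := hx.2
      simpa [List.ofFn_zero] using this.symm
    · intro hg
      exact ⟨fun p => p.elim0, by simp [List.ofFn_zero, hg]⟩
  rw [Ncnt, Nat.card_congr (Equiv.subtypeEquivRight hiff)]
  by_cases hg : g = 1
  · subst hg
    rw [if_pos rfl, Nat.card_congr (Equiv.subtypeUnivEquiv fun _ => rfl)]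
    exact Nat.card_unique
  · simp only [if_neg hg]
    have : IsEmpty {_x : TupleSpace 4 0 0 // g = 1} := ⟨fun x => hg x.2⟩
    exact Nat.card_of_isEmpty

def fx (g : Perm (Fin 4)) : ℤ := (Finset.univ.filter fun x => g x = x).card
def sg (g : Perm (Fin 4)) : ℤ := Perm.sign g
def chi : Fin 5 → Perm (Fin 4) → ℤ := fun i g =>
  ![1, sg g, (fx g - 1) ^ 2 - 1 - (fx g - 1) * (1 + sg g), fx g - 1, sg g * (fx g - 1)] i
def ttZ : Fin 5 → ℤ := ![6, -6, 0, 2, -2]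
def eeZ : Fin 5 → ℤ := ![576, 576, 144, 64, 64]
def kpp (x : Perm (Fin 4)) : ℤ := 24 + 24 * sg x + 12 * chi 2 x + 8 * chi 3 x + 8 * chi 4 x

set_option maxRecDepth 40000 in
lemma Lswap : ∀ (i : Fin 5) (g : Perm (Fin 4)),
    (∑ τ : Swaps, chi i (g * τ.1)) = ttZ i * chi i g := by decide

set_option maxRecDepth 40000 in
lemma Lreg : ∀ g : Perm (Fin 4),
    chi 0 g + chi 1 g + 2 * chi 2 g + 3 * chi 3 g + 3 * chi 4 g
      = if g = 1 then 24 else 0 := by decide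

set_option maxRecDepth 40000 in
set_option maxHeartbeats 1000000 in
lemma Lcomm2 : ∀ (i : Fin 5) (g : Perm (Fin 4)),
    (∑ x : Perm (Fin 4), kpp x * chi i (x⁻¹ * g)) = eeZ i * chi i g := by decide

set_option maxRecDepth 40000 in
set_option maxHeartbeats 4000000 in
lemma Lkappa : ∀ x : Perm (Fin 4),
    ((Finset.univ.filter fun p : Perm (Fin 4) × Perm (Fin 4) => ⁅p.1, p.2⁆ = x).card : ℤ)
      = kpp x := by decide

-- extra chi-at-one lemmas
lemma chi0_one : chi 0 1 = 1 := by decide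
lemma chi1_one : chi 1 1 = 1 := by decide
lemma chi2_one : chi 2 1 = 2 := by decide
lemma chi3_one : chi 3 1 = 3 := by decide
lemma chi4_one : chi 4 1 = 3 := by decide

def ddQ : Fin 5 → ℚ := ![1, 1, 2, 3, 3]
def ttQ : Fin 5 → ℚ := ![6, -6, 0, 2, -2]
def ww (i : Fin 5) (h m : ℕ) : ℚ := ddQ i * (24 / ddQ i) ^ (2 * h) * ttQ i ^ m
def F (h m : ℕ) (g : Perm (Fin 4)) : ℚ := (1/24) * ∑ i, ww i h m * (chi i g : ℚ)

lemma ttQ_cast (i : Fin 5) : (ttZ i : ℚ) = ttQ i := by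
  fin_cases i <;> norm_num [ttZ, ttQ]

lemma ww_succ_m (i : Fin 5) (h m : ℕ) : ww i h (m+1) = ww i h m * ttQ i := by
  rw [ww, ww, pow_succ]; ring

lemma ww_succ_h (i : Fin 5) (h m : ℕ) : ww i (h+1) m = ww i h m * (eeZ i : ℚ) := by
  have h2 : (24 / ddQ i) ^ 2 = (eeZ i : ℚ) := by fin_cases i <;> norm_num [ddQ, eeZ]
  rw [ww, ww, show 2*(h+1) = 2*h + 2 from by ring, pow_add, h2]; ring

lemma F_succ_m (h m : ℕ) (g : Perm (Fin 4)) :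
    F h (m+1) g = ∑ τ : Swaps, F h m (g * τ.1) := by
  have key : ∀ i : Fin 5, (∑ τ : Swaps, (chi i (g * τ.1) : ℚ)) = (ttZ i : ℚ) * chi i g := by
    intro i
    rw [← Int.cast_sum, Lswap i g, Int.cast_mul]
  symm
  calc ∑ τ : Swaps, F h m (g * τ.1)
      = (1/24) * ∑ i : Fin 5, ∑ τ : Swaps, ww i h m * (chi i (g * τ.1) : ℚ) := by
        simp only [F]
        rw [← Finset.mul_sum, Finset.sum_comm]
    _ = (1/24) * ∑ i : Fin 5, ww i h m * ((ttZ i : ℚ) * (chi i g : ℚ)) := by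
        congr 1
        refine Finset.sum_congr rfl fun i _ => ?_
        rw [← Finset.mul_sum, key i]
    _ = F h (m+1) g := by
        simp only [F]
        congr 1
        refine Finset.sum_congr rfl fun i _ => ?_
        rw [ww_succ_m, ttQ_cast]; ring

lemma F_succ_h (h m : ℕ) (g : Perm (Fin 4)) :
    F (h+1) m g = ∑ p : Perm (Fin 4) × Perm (Fin 4), F h m (⁅p.1, p.2⁆⁻¹ * g) := by
  have key : ∀ i : Fin 5,
      (∑ p : Perm (Fin 4) × Perm (Fin 4), (chi i (⁅p.1, p.2⁆⁻¹ * g) : ℚ))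
        = (eeZ i : ℚ) * chi i g := by
    intro i
    have hz : (∑ p : Perm (Fin 4) × Perm (Fin 4), chi i (⁅p.1, p.2⁆⁻¹ * g))
        = eeZ i * chi i g := by
      have h1 := Finset.sum_fiberwise' (Finset.univ : Finset (Perm (Fin 4) × Perm (Fin 4)))
        (fun p => ⁅p.1, p.2⁆) (fun x => chi i (x⁻¹ * g))
      rw [← h1]
      calc ∑ x : Perm (Fin 4), ∑ _p ∈ Finset.univ.filter fun p :
              Perm (Fin 4) × Perm (Fin 4) => ⁅p.1, p.2⁆ = x, chi i (x⁻¹ * g)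
          = ∑ x : Perm (Fin 4), kpp x * chi i (x⁻¹ * g) := by
            refine Finset.sum_congr rfl fun x _ => ?_
            rw [Finset.sum_const, nsmul_eq_mul, ← Lkappa x]
        _ = eeZ i * chi i g := Lcomm2 i g
    rw [← Int.cast_sum, hz, Int.cast_mul]
  symm
  calc ∑ p : Perm (Fin 4) × Perm (Fin 4), F h m (⁅p.1, p.2⁆⁻¹ * g)
      = (1/24) * ∑ i : Fin 5, ∑ p : Perm (Fin 4) × Perm (Fin 4),
          ww i h m * (chi i (⁅p.1, p.2⁆⁻¹ * g) : ℚ) := by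
        simp only [F]
        rw [← Finset.mul_sum, Finset.sum_comm]
    _ = (1/24) * ∑ i : Fin 5, ww i h m * ((eeZ i : ℚ) * (chi i g : ℚ)) := by
        congr 1
        refine Finset.sum_congr rfl fun i _ => ?_
        rw [← Finset.mul_sum, key i]
    _ = F (h+1) m g := by
        simp only [F]
        congr 1
        refine Finset.sum_congr rfl fun i _ => ?_
        rw [ww_succ_h]; ring

lemma F_zero (g : Perm (Fin 4)) : F 0 0 g = if g = 1 then 1 else 0 := by
  have hz : ((chi 0 g + chi 1 g + 2 * chi 2 g + 3 * chi 3 g + 3 * chi 4 g : ℤ) : ℚ)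
      = if g = 1 then (24 : ℚ) else 0 := by
    rw [Lreg g]; split <;> norm_num
  push_cast at hz
  simp only [F, Fin.sum_univ_five, ww, pow_zero, mul_one, ddQ]
  simp only [Matrix.cons_val]
  norm_num [Matrix.cons_val_zero, Matrix.cons_val_one, Matrix.head_cons]
  by_cases hg : g = 1 <;> simp only [hg, if_true, if_false] at hz ⊢ <;> try rw [if_neg hg] at hz ⊢
  · linarith
  · linarith

lemma ncnt_eq_F : ∀ h m : ℕ, ∀ g : Perm (Fin 4), (Ncnt h m g : ℚ) = F h m g := by
  intro h
  induction h with
  | zero =>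
    intro m
    induction m with
    | zero =>
      intro g
      rw [ncnt_zero, F_zero]
      split <;> norm_num
    | succ m ih =>
      intro g
      rw [ncnt_succ_m, Nat.cast_sum, F_succ_m]
      exact Finset.sum_congr rfl fun τ _ => ih (g * τ.1)
  | succ h ih =>
    intro m g
    rw [ncnt_succ_h, Nat.cast_sum, F_succ_h]
    exact Finset.sum_congr rfl fun p _ => ih m _

lemma F_one (h m : ℕ) : F h m 1 = (1/24) * ((24:ℚ)^(2*h) * 6^m + (24:ℚ)^(2*h) * (-6:ℚ)^m
    + 4 * (12:ℚ)^(2*h) * (0:ℚ)^m + 9 * (8:ℚ)^(2*h) * 2^m + 9 * (8:ℚ)^(2*h) * (-2:ℚ)^m) := by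
  simp only [F, Fin.sum_univ_five, ww, ddQ, ttQ, chi0_one, chi1_one, chi2_one, chi3_one, chi4_one]
  simp only [Matrix.cons_val]
  norm_num [Matrix.cons_val_zero, Matrix.cons_val_one, Matrix.head_cons]
  ring

lemma p24 (h : ℕ) : (24:ℚ)^(2*h) = 2^(6*h) * 3^(2*h) := by
  rw [show (24:ℚ) = 2^3 * 3 from by norm_num, mul_pow, ← pow_mul,
    show 3*(2*h) = 6*h from by ring]
lemma p12 (h : ℕ) : (12:ℚ)^(2*h) = 2^(4*h) * 3^(2*h) := by
  rw [show (12:ℚ) = 2^2 * 3 from by norm_num, mul_pow, ← pow_mul,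
    show 2*(2*h) = 4*h from by ring]
lemma p8 (h : ℕ) : (8:ℚ)^(2*h) = 2^(6*h) := by
  rw [show (8:ℚ) = 2^3 from by norm_num, ← pow_mul, show 3*(2*h) = 6*h from by ring]
lemma p6 (m : ℕ) : (6:ℚ)^m = 2^m * 3^m := by
  rw [show (6:ℚ) = 2 * 3 from by norm_num, mul_pow]

theorem degree_four_reducible_count (h m : ℕ) :
    (Even m → 0 < m → (Bcount 4 h m : ℚ) =
      3 * (2 : ℚ) ^ ((m : ℤ) + 6 * h - 2) * ((3 : ℚ) ^ (2 * (h : ℤ) - 2 + m) + 1)) ∧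
    (Odd m → (Bcount 4 h m : ℚ) = 0) ∧
    (m = 0 → (Bcount 4 h m : ℚ) =
      3 * (2 : ℚ) ^ (4 * (h : ℤ) - 1) *
        ((2 : ℚ) ^ (2 * (h : ℤ) - 1) * (3 : ℚ) ^ (2 * (h : ℤ) - 2) +
          (2 : ℚ) ^ (2 * (h : ℤ) - 1) + (3 : ℚ) ^ (2 * (h : ℤ) - 2))) := by
  have hb : (Bcount 4 h m : ℚ) = F h m 1 := by
    rw [show Bcount 4 h m = Ncnt h m 1 from rfl, ncnt_eq_F]
  have h2 : (2:ℚ) ≠ 0 := by norm_num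
  have h3 : (3:ℚ) ≠ 0 := by norm_num
  refine ⟨?_, ?_, ?_⟩
  · intro hev hpos
    rw [hb, F_one, hev.neg_pow, hev.neg_pow, zero_pow hpos.ne']
    have em2 : (m:ℤ) + 6*h - 2 = ((m + 6*h : ℕ) : ℤ) - 2 := by push_cast; ring
    have em3 : 2*(h:ℤ) - 2 + m = ((2*h + m : ℕ) : ℤ) - 2 := by push_cast; ring
    rw [em2, em3, zpow_sub₀ h2, zpow_sub₀ h3, zpow_natCast, zpow_natCast,
      show (2:ℚ)^(2:ℤ) = 4 from by norm_num, show (3:ℚ)^(2:ℤ) = 9 from by norm_num,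
      p24, p12, p8, p6, pow_add, pow_add]
    ring
  · intro hodd
    rw [hb, F_one, hodd.neg_pow, hodd.neg_pow, zero_pow hodd.pos.ne']
    ring
  · intro hm
    subst hm
    rw [hb, F_one]
    have e1 : 4*(h:ℤ) - 1 = ((4*h : ℕ) : ℤ) - 1 := by push_cast; ring
    have e2 : 2*(h:ℤ) - 1 = ((2*h : ℕ) : ℤ) - 1 := by push_cast; ring
    have e3 : 2*(h:ℤ) - 2 = ((2*h : ℕ) : ℤ) - 2 := by push_cast; ring
    rw [e1, e2, e3, zpow_sub₀ h2, zpow_sub₀ h2, zpow_sub₀ h3, zpow_natCast, zpow_natCast,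
      zpow_natCast,
      show (2:ℚ)^(1:ℤ) = 2 from by norm_num, show (3:ℚ)^(2:ℤ) = 9 from by norm_num,
      p24, p12, p8]
    norm_num
    ring
end

section
/- For every integer k ≥ 1 and every real number t ≠ 0, (sinh(t/2)/(t/2))^{k−1} = ∑_{g=0}^{∞} δ^k_{2g} · t^{2g}, where δ^k_{2g} = (1/(k+2g−1)!) · ∑_{m=0}^{k−1} C(k−1,m)·(−1)^m·((k−1)/2 − m)^{k+2g−1}, the series converging for all such t. -/
open Finset

lemma real_exp_hasSum (x : ℝ) : HasSum (fun j : ℕ => x ^ j / j.factorial) (Real.exp x) := by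
  rw [Real.exp_eq_exp_ℝ]
  exact NormedSpace.expSeries_div_hasSum_exp x

/-- Alternating sums of binomial coefficients against polynomials of low degree vanish. -/
lemma alt_sum_vanish : ∀ n : ℕ, ∀ j : ℕ, j < n → ∀ c : ℝ,
    ∑ m ∈ range (n + 1), (n.choose m : ℝ) * (-1) ^ m * (c - m) ^ j = 0 := by
  intro n
  induction n with
  | zero => intro j hj; omega
  | succ n IH =>
    intro j hj c
    have key : ∑ m ∈ range (n + 2), ((n+1).choose m : ℝ) * (-1) ^ m * (c - m) ^ j
        = ∑ i ∈ range (n + 1), (n.choose i : ℝ) * (-1) ^ i *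
            ((c - i) ^ j - (c - ((i+1 : ℕ) : ℝ)) ^ j) := by
      have pascal : ∀ i ∈ range (n+1),
          (((n+1).choose (i+1) : ℝ)) * (-1) ^ (i+1) * (c - ((i+1:ℕ) : ℝ)) ^ j
          = -((n.choose i : ℝ) * (-1) ^ i * (c - ((i+1:ℕ) : ℝ)) ^ j)
            + -((n.choose (i+1) : ℝ) * (-1) ^ i * (c - ((i+1:ℕ) : ℝ)) ^ j) := by
        intro i _
        rw [Nat.choose_succ_succ]
        push_cast
        ring
      rw [Finset.sum_range_succ' _ (n+1), Finset.sum_congr rfl pascal,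
        Finset.sum_add_distrib]
      simp only [mul_sub, Finset.sum_sub_distrib, Finset.sum_neg_distrib]
      have h2 : ∑ i ∈ range (n+1), (n.choose (i+1) : ℝ) * (-1) ^ i * (c - ((i+1:ℕ):ℝ)) ^ j
          = ∑ i ∈ range n, (n.choose (i+1) : ℝ) * (-1) ^ i * (c - ((i+1:ℕ):ℝ)) ^ j := by
        rw [Finset.sum_range_succ, Nat.choose_succ_self]
        simp
      have h3 : ∑ i ∈ range (n+1), (n.choose i : ℝ) * (-1) ^ i * (c - (i:ℝ)) ^ j
          = - (∑ i ∈ range n, (n.choose (i+1) : ℝ) * (-1) ^ i * (c - ((i+1:ℕ):ℝ)) ^ j)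
            + (n.choose 0 : ℝ) * (-1) ^ (0:ℕ) * (c - ((0:ℕ):ℝ)) ^ j := by
        rw [Finset.sum_range_succ' _ n, ← Finset.sum_neg_distrib]
        congr 1
        apply Finset.sum_congr rfl
        intro i _
        ring
      rw [h2, h3]
      simp only [Nat.choose_zero_right, Nat.cast_one]
      push_cast
      ring
    rw [key]
    have hexp : ∀ i ∈ range (n+1), (n.choose i : ℝ) * (-1) ^ i *
        ((c - i) ^ j - (c - ((i+1:ℕ):ℝ)) ^ j)
        = ∑ l ∈ range j, ((j.choose l : ℝ) *
            ((n.choose i : ℝ) * (-1) ^ i * ((c - 1) - i) ^ l)) := by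
      intro i _
      have hco : (c - ((i+1:ℕ):ℝ)) = (c - 1) - i := by push_cast; ring
      have hb : (c - (i:ℝ)) ^ j = ∑ l ∈ range (j+1),
          ((c - 1) - (i:ℝ)) ^ l * (1:ℝ) ^ (j - l) * (j.choose l) := by
        have h5 : ((c - 1) - (i:ℝ)) + 1 = c - i := by ring
        rw [← add_pow, h5]
      rw [hco, hb, Finset.sum_range_succ]
      simp only [one_pow, Nat.choose_self, Nat.cast_one, mul_one]
      rw [add_sub_cancel_right, Finset.mul_sum]
      apply Finset.sum_congr rfl
      intro l _
      ring
    rw [Finset.sum_congr rfl hexp, Finset.sum_comm]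
    apply Finset.sum_eq_zero
    intro l hl
    rw [← Finset.mul_sum, IH l (by simp at hl; omega) (c-1), mul_zero]

/-- Parity vanishing. -/
lemma alt_sum_parity (n j : ℕ) (h : ¬ Even (n + j)) :
    ∑ m ∈ range (n + 1), (n.choose m : ℝ) * (-1) ^ m * ((n:ℝ)/2 - m) ^ j = 0 := by
  have hterm : ∀ m ∈ range (n+1),
      (n.choose (n - m) : ℝ) * (-1) ^ (n - m) * ((n:ℝ)/2 - ((n - m : ℕ):ℝ)) ^ j
      = (-1 : ℝ) ^ (n + j) * ((n.choose m : ℝ) * (-1) ^ m * ((n:ℝ)/2 - m) ^ j) := by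
    intro m hm
    simp only [Finset.mem_range] at hm
    have hmn : m ≤ n := by omega
    rw [Nat.choose_symm hmn]
    have h1 : ((n - m : ℕ) : ℝ) = (n : ℝ) - m := by push_cast [hmn]; ring
    have h2 : (-1 : ℝ) ^ (n - m) * (-1) ^ m = (-1) ^ n := by
      rw [← pow_add]; congr 1; omega
    have h5 : (-1 : ℝ) ^ m * (-1) ^ m = 1 := by
      rw [← pow_add]; exact Even.neg_one_pow ⟨m, rfl⟩
    have h3 : ((n:ℝ)/2 - ((n:ℝ) - m)) ^ j = (-1:ℝ)^j * ((n:ℝ)/2 - m) ^ j := by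
      rw [← neg_pow]; ring_nf
    have h4 : (-1:ℝ) ^ (n+j) = (-1)^n * (-1)^j := pow_add _ _ _
    rw [h1, h3, h4]
    linear_combination ((n.choose m : ℝ) * (-1)^j * ((n:ℝ)/2 - m)^j * (-1)^m) * h2
      - ((n.choose m : ℝ) * (-1)^j * ((n:ℝ)/2 - m)^j * (-1)^(n - m)) * h5
  have key : (∑ m ∈ range (n+1), (n.choose m : ℝ) * (-1)^m * ((n:ℝ)/2 - m)^j)
      = (-1 : ℝ)^(n+j) * ∑ m ∈ range (n+1), (n.choose m : ℝ) * (-1)^m * ((n:ℝ)/2 - m)^j := by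
    conv_lhs => rw [← Finset.sum_range_reflect]
    simp only [Nat.add_sub_cancel]
    rw [Finset.mul_sum]
    exact Finset.sum_congr rfl hterm
  have hneg : (-1 : ℝ) ^ (n + j) = -1 := Odd.neg_one_pow (Nat.not_even_iff_odd.mp h)
  rw [hneg] at key
  linarith

/-- For k ≥ 1 and t ≠ 0, (sinh(t/2)/(t/2))^{k−1} = ∑_{g≥0} δ^k_{2g} t^{2g}, where
δ^k_{2g} = (1/(k+2g−1)!) ∑_{m=0}^{k−1} C(k−1,m)(−1)^m((k−1)/2 − m)^{k+2g−1}. -/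
theorem hasSum_sinh_pow_expansion (k : ℕ) (hk : 1 ≤ k) (t : ℝ) (ht : t ≠ 0) :
    HasSum
      (fun g : ℕ =>
        (1 / ((k + 2 * g - 1).factorial : ℝ)) *
          (∑ m ∈ Finset.range k,
            ((k - 1).choose m : ℝ) * (-1) ^ m *
              (((k : ℝ) - 1) / 2 - (m : ℝ)) ^ (k + 2 * g - 1)) *
          t ^ (2 * g))
      ((Real.sinh (t / 2) / (t / 2)) ^ (k - 1)) := by
  obtain ⟨n, rfl⟩ : ∃ n, k = n + 1 := ⟨k - 1, by omega⟩
  simp only [Nat.add_sub_cancel, show ∀ g, n + 1 + 2*g - 1 = n + 2*g from fun g => by omega]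
  push_cast
  simp only [add_sub_cancel_right]
  set A : ℕ → ℝ := fun j => ∑ m ∈ range (n + 1),
    (n.choose m : ℝ) * (-1) ^ m * ((n:ℝ)/2 - (m:ℝ)) ^ j with hA
  have hsum : HasSum (fun j : ℕ => A j * t ^ j / j.factorial)
      ((Real.exp (t/2) - Real.exp (-(t/2))) ^ n) := by
    have h1 : ∀ m ∈ range (n+1), HasSum
        (fun j : ℕ => (n.choose m : ℝ) * (-1)^m * ((t * ((n:ℝ)/2 - m)) ^ j / j.factorial))
        ((n.choose m : ℝ) * (-1)^m * Real.exp (t * ((n:ℝ)/2 - m))) := by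
      intro m _
      exact (real_exp_hasSum (t * ((n:ℝ)/2 - m))).mul_left _
    have h2 := hasSum_sum h1
    have hval : ∑ m ∈ range (n+1), (n.choose m : ℝ) * (-1)^m * Real.exp (t * ((n:ℝ)/2 - m))
        = (Real.exp (t/2) - Real.exp (-(t/2))) ^ n := by
      rw [sub_pow]
      conv_rhs => rw [← Finset.sum_range_reflect]
      simp only [Nat.add_sub_cancel]
      apply Finset.sum_congr rfl
      intro m hm
      simp only [Finset.mem_range] at hm
      have hmn : m ≤ n := by omega
      rw [Nat.choose_symm hmn, Nat.sub_sub_self hmn]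
      have hsgn : (-1 : ℝ) ^ (n - m + n) = (-1) ^ m := by
        have he : n - m + n = m + 2 * (n - m) := by omega
        rw [he, pow_add]; simp [pow_mul]
      have hsplit : Real.exp (t * ((n:ℝ)/2 - m))
          = Real.exp (((n - m : ℕ) : ℝ) * (t/2)) * Real.exp ((m : ℝ) * -(t/2)) := by
        rw [← Real.exp_add]
        congr 1
        push_cast [hmn]
        ring
      rw [hsgn, ← Real.exp_nat_mul, ← Real.exp_nat_mul, hsplit]
      ring
    rw [hval] at h2
    convert h2 using 2 with j
    rw [hA]
    simp only [Finset.sum_div, Finset.sum_mul]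
    apply Finset.sum_congr rfl
    intro m _
    rw [mul_pow]
    ring
  have hinj : Function.Injective (fun g : ℕ => n + 2 * g) := by
    intro a b h
    simp only at h
    omega
  have hzero : ∀ j, j ∉ Set.range (fun g : ℕ => n + 2 * g) →
      A j * t ^ j / j.factorial = 0 := by
    intro j hj
    have hA0 : A j = 0 := by
      rcases lt_or_ge j n with hlt | hge
      · exact alt_sum_vanish n j hlt ((n:ℝ)/2)
      · apply alt_sum_parity
        intro heven
        apply hj
        obtain ⟨g, hg⟩ : ∃ g, j = n + 2 * g := by
          rcases heven with ⟨c, hc⟩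
          exact ⟨c - n, by omega⟩
        exact ⟨g, hg.symm⟩
    rw [hA0]; simp
  have hsum2 : HasSum (fun g : ℕ => A (n + 2*g) * t ^ (n + 2*g) / (n + 2*g).factorial)
      ((Real.exp (t/2) - Real.exp (-(t/2))) ^ n) :=
    (hinj.hasSum_iff hzero).mpr hsum
  have hsum3 := hsum2.mul_right ((t ^ n)⁻¹)
  have htn : (t : ℝ) ^ n ≠ 0 := pow_ne_zero n ht
  convert hsum3 using 1
  · rfl
  · funext g
    simp only [hA]
    have hfac : ((n + 2*g).factorial : ℝ) ≠ 0 := Nat.cast_ne_zero.mpr (Nat.factorial_ne_zero _)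
    rw [pow_add]
    field_simp
  · rw [Real.sinh_eq]
    have hdiv : (Real.exp (t/2) - Real.exp (-(t/2))) / 2 / (t/2)
        = (Real.exp (t/2) - Real.exp (-(t/2))) * t⁻¹ := by
      field_simp
    rw [hdiv, mul_pow, inv_pow]
end
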